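/- arXiv:2601.07547 — 10 statements merged into one kernel-verified Lean document; each statement's English description precedes it below -/
import Mathlib

section
/- Let s ≥ 1 and let u, u' ∈ Σ_2^n (binary sequences of length n) with d = d_H(u, u') satisfying 1 ≤ d ≤ 2s. Then |B^S_s(u) ∩ B^S_s(u')| = ξ^{2,n}_{d,s}, where ξ^{2,n}_{d,s} = Σ_{i=0}^{d} binom(d,i) · Σ_{k=0}^{s−d+min{i, d−i}} binom(n−d, k) if 1 ≤ d ≤ s, and ξ^{2,n}_{d,s} = Σ_{i=d−s}^{s} binom(d,i) · Σ_{k=0}^{s−d+min{i, d−i}} binom(n−d, k) if s < d ≤ 2s; here any inner sum whose upper limit is negative is understood to be 0. -/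
/-!
Over a binary alphabet a word `v` is determined by the set `S` of positions where it differs
from `u`; then `d_H(v, u) = #S` and `d_H(v, u') = #(S ∆ D)`, where `D` is the set of the `d`
positions where `u` and `u'` differ. Writing `i = #(S ∩ D)` and `k = #(S \ D)`, the two ball
conditions read `i + k ≤ s` and `(d - i) + k ≤ s`, and there are `C(d, i) * C(n - d, k)` sets
with given `i` and `k`. For fixed `i` the admissible `k` are those with
`k ≤ s - d + min i (d - i)`, and such `k` exist exactly when `d - s ≤ i ≤ s`.
-/

open Finset
open scoped symmDiff

theorem Fin.two_ne_iff_xor_ne (a b c : Fin 2) : a ≠ c ↔ Xor (a ≠ b) (b ≠ c) := by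
  revert a b c
  decide

section BinaryWords

variable {ι : Type*} [Fintype ι] [DecidableEq ι]

def finTwoFunEquivFinset (u : ι → Fin 2) : (ι → Fin 2) ≃ Finset ι where
  toFun v := {j | v j ≠ u j}
  invFun S j := if j ∈ S then u j + 1 else u j
  left_inv v := funext fun j => by
    by_cases h : v j = u j
    · simp [h]
    · simp only [ne_eq, mem_filter, mem_univ, h, not_false_eq_true, and_self, ↓reduceIte,
        Fin.isValue]
      omega
  right_inv S := by
    ext j
    by_cases h : j ∈ S <;> simp [h]

theorem card_finTwoFunEquivFinset (u v : ι → Fin 2) :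
    #(finTwoFunEquivFinset u v) = hammingDist v u := rfl

theorem hammingDist_eq_card_symmDiff (u u' v : ι → Fin 2) :
    hammingDist v u' = #(finTwoFunEquivFinset u v ∆ ({j | u j ≠ u' j} : Finset ι)) := by
  unfold hammingDist
  congr 1
  ext j
  simpa [finTwoFunEquivFinset, mem_symmDiff, Xor] using Fin.two_ne_iff_xor_ne (v j) (u j) (u' j)

theorem ncard_setOf_hammingDist_le_and_le (u u' : ι → Fin 2) (s t : ℕ) :
    {v | hammingDist v u ≤ s ∧ hammingDist v u' ≤ t}.ncard
      = #{S : Finset ι | #S ≤ s ∧ #(S ∆ ({j | u j ≠ u' j} : Finset ι)) ≤ t} := by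
  rw [← Nat.card_coe_set_eq, ← Fintype.card_subtype, ← Nat.card_eq_fintype_card]
  refine Nat.card_congr ((finTwoFunEquivFinset u).subtypeEquiv fun v => ?_)
  rw [Set.mem_ofPred_eq, ← card_finTwoFunEquivFinset, hammingDist_eq_card_symmDiff u u' v]

end BinaryWords

theorem Finset.card_symmDiff {α : Type*} [DecidableEq α] (s t : Finset α) :
    #(s ∆ t) = #(s \ t) + #(t \ s) := by
  rw [symmDiff_def, sup_eq_union, card_union_of_disjoint disjoint_sdiff_sdiff]

theorem Finset.sum_powerset_apply_card_inter_card_sdiff {α M : Type*} [DecidableEq α]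
    [AddCommMonoid M] (f : ℕ → ℕ → M) {X D : Finset α} (hD : D ⊆ X) :
    ∑ S ∈ X.powerset, f #(S ∩ D) #(S \ D)
      = ∑ i ∈ range (#D + 1), (#D).choose i •
          ∑ k ∈ range (#(X \ D) + 1), (#(X \ D)).choose k • f i k := by
  have hsplit : ∑ S ∈ X.powerset, f #(S ∩ D) #(S \ D)
      = ∑ p ∈ D.powerset ×ˢ (X \ D).powerset, f #p.1 #p.2 := by
    refine sum_nbij' (fun S => (S ∩ D, S \ D)) (fun p => p.1 ∪ p.2) ?_ ?_ ?_ ?_ (fun _ _ => rfl)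
    · intro S hS
      simp only [mem_product, mem_powerset] at hS ⊢
      exact ⟨inter_subset_right, sdiff_subset_sdiff hS le_rfl⟩
    · rintro ⟨A, B⟩ h
      simp only [mem_product, mem_powerset] at h ⊢
      exact union_subset (h.1.trans hD) (h.2.trans sdiff_subset)
    · intro S _
      exact sup_inf_sdiff S D
    · rintro ⟨A, B⟩ h
      simp only [mem_product, mem_powerset, subset_sdiff] at h
      obtain ⟨hA, -, hB⟩ := h
      refine Prod.ext ?_ ?_
      · rw [union_inter_distrib_right, inter_eq_left.mpr hA, disjoint_iff_inter_eq_empty.mp hB,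
          union_empty]
      · rw [union_sdiff_distrib, sdiff_eq_empty_iff_subset.mpr hA, empty_union,
          sdiff_eq_self_of_disjoint hB]
  rw [hsplit, sum_product, sum_powerset_apply_card (fun i => ∑ B ∈ (X \ D).powerset, f i #B)]
  simp only [sum_powerset_apply_card]

theorem Nat.sum_range_choose_filter_le (N m : ℕ) :
    ∑ k ∈ range (N + 1) with k ≤ m, N.choose k = ∑ k ∈ range (m + 1), N.choose k := by
  refine sum_subset (fun k hk => ?_) (fun k hk hkN => ?_)
  · simp only [mem_filter, mem_range] at hk ⊢
    omega
  · simp only [mem_filter, mem_range, not_and] at hk hkN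
    exact Nat.choose_eq_zero_of_lt (by omega)

theorem sum_range_choose_smul_ite_add_le_and_add_le {d i : ℕ} (hi : i ≤ d) (s N : ℕ) :
    ∑ k ∈ range (N + 1), N.choose k • (if i + k ≤ s ∧ d - i + k ≤ s then 1 else 0)
      = if d ≤ s + i ∧ i ≤ s then ∑ k ∈ range (s + min i (d - i) - d + 1), N.choose k
        else 0 := by
  simp only [smul_eq_mul, mul_ite, mul_one, mul_zero]
  rw [← sum_filter]
  split_ifs with h
  · rw [← Nat.sum_range_choose_filter_le]
    refine sum_congr (filter_congr fun k _ => ?_) fun _ _ => rfl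
    omega
  · refine sum_eq_zero fun k hk => ?_
    simp only [mem_filter] at hk
    omega

theorem filter_range_le_add_and_le (d s : ℕ) :
    {i ∈ range (d + 1) | d ≤ s + i ∧ i ≤ s}
      = if d ≤ s then range (d + 1) else Icc (d - s) s := by
  ext i
  split_ifs <;> simp only [mem_filter, mem_range, mem_Icc] <;> omega

theorem stmt3_general (n s : ℕ) (u u' : Fin n → Fin 2)
    (d : ℕ) (hd : hammingDist u u' = d) :
    {v : Fin n → Fin 2 | hammingDist v u ≤ s ∧ hammingDist v u' ≤ s}.ncard
      = if d ≤ s then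
          ∑ i ∈ Finset.range (d + 1), Nat.choose d i *
            ∑ k ∈ Finset.range (s + min i (d - i) - d + 1), Nat.choose (n - d) k
        else
          ∑ i ∈ Finset.Icc (d - s) s, Nat.choose d i *
            ∑ k ∈ Finset.range (s + min i (d - i) - d + 1), Nat.choose (n - d) k := by
  set D : Finset (Fin n) := {j | u j ≠ u' j}
  have hD : #D = d := hd
  have hDc : #(univ \ D) = n - d := by
    rw [← compl_eq_univ_sdiff, card_compl, hD, Fintype.card_fin]
  have hballs (S : Finset (Fin n)) : #S ≤ s ∧ #(S ∆ D) ≤ s ↔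
      #(S ∩ D) + #(S \ D) ≤ s ∧ d - #(S ∩ D) + #(S \ D) ≤ s := by
    rw [card_inter_add_card_sdiff, card_symmDiff, card_sdiff (t := D), inter_comm, hD]
    omega
  rw [ncard_setOf_hammingDist_le_and_le, filter_congr fun S _ => hballs S, card_filter,
    ← powerset_univ, sum_powerset_apply_card_inter_card_sdiff
      (fun i k => if i + k ≤ s ∧ d - i + k ≤ s then 1 else 0) (subset_univ D), hD, hDc]
  rw [sum_congr rfl fun i hi => by
    rw [sum_range_choose_smul_ite_add_le_and_add_le (Nat.lt_succ_iff.mp (mem_range.mp hi)),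
      smul_ite, smul_zero]]
  rw [← sum_filter, filter_range_le_add_and_le]
  split_ifs <;> rfl

/-- Exact size of the intersection of two `s`-substitution balls of binary sequences of
length `n` at Hamming distance `d` with `1 ≤ d ≤ 2s`.  The inner upper limit
`s − d + min{i, d−i}` is written as `s + min i (d - i) - d`, which (for the `i` in the
stated ranges) is a nonnegative quantity, so truncated subtraction agrees with the
intended value; sums with negative upper limit are empty by convention. -/
theorem stmt3 (n s : ℕ) (hs : 1 ≤ s) (u u' : Fin n → Fin 2)
    (d : ℕ) (hd : hammingDist u u' = d) (hd1 : 1 ≤ d) (hd2 : d ≤ 2 * s) :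
    {v : Fin n → Fin 2 | hammingDist v u ≤ s ∧ hammingDist v u' ≤ s}.ncard
      = if d ≤ s then
          ∑ i ∈ Finset.range (d + 1), Nat.choose d i *
            ∑ k ∈ Finset.range (s + min i (d - i) - d + 1), Nat.choose (n - d) k
        else
          ∑ i ∈ Finset.Icc (d - s) s, Nat.choose d i *
            ∑ k ∈ Finset.range (s + min i (d - i) - d + 1), Nat.choose (n - d) k :=
  stmt3_general n s u u' d hd
end

section
/- Let q > 2 and s ≥ 1 be integers and let u, u' ∈ Σ_q^n with d = d_H(u, u') satisfying 1 ≤ d ≤ 2s. Define η_{i,j} = (q−2)^{d−i−j} · Σ_{k=0}^{s−d+min{i,j}} binom(n−d, k)·(q−1)^k (with the sum understood to be 0 when its upper limit is negative). Then |B^S_s(u) ∩ B^S_s(u')| = ξ^{q,n}_{d,s}, where ξ^{q,n}_{d,s} = Σ_{i=0}^{d} Σ_{j=0}^{d−i} binom(d,i)·binom(d−i,j)·η_{i,j} if 1 ≤ d ≤ s, and ξ^{q,n}_{d,s} = Σ_{i=d−s}^{s} Σ_{j=d−s}^{d−i} binom(d,i)·binom(d−i,j)·η_{i,j} if s < d ≤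 2s. -/
open Finset

open Finset

lemma aux_count_pi {n q : ℕ} (S : Fin n → Finset (Fin q)) :
    #(Finset.univ.filter fun v : Fin n → Fin q => ∀ x, v x ∈ S x) = ∏ x, #(S x) := by
  rw [← Fintype.card_piFinset]
  congr 1
  ext v
  simp [Fintype.mem_piFinset]

lemma aux_split {n q : ℕ} (v w : Fin n → Fin q) (D : Finset (Fin n)) :
    hammingDist v w
      = (#D - #(D.filter fun x => v x = w x)) + #(Dᶜ.filter fun x => v x ≠ w x) := by
  have h0 : hammingDist v w = #(Finset.univ.filter fun x => v x ≠ w x) := rfl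
  have h1 : (Finset.univ.filter fun x => v x ≠ w x)
      = (D.filter fun x => v x ≠ w x) ∪ (Dᶜ.filter fun x => v x ≠ w x) := by
    rw [← Finset.filter_union, Finset.union_compl]
  have h2 : #(D.filter fun x => v x = w x) + #(D.filter fun x => ¬ (v x = w x)) = #D :=
    Finset.card_filter_add_card_filter_not _
  rw [h0, h1, Finset.card_union_of_disjoint
      (Finset.disjoint_filter_filter disjoint_compl_right)]
  simp only [ne_eq] at *
  omega
open Finset

lemma aux_pows {n : ℕ} (Y : Finset (Fin n)) (P : Finset (Fin n) → Prop) [DecidablePred P]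
    (f : Finset (Fin n) → ℕ) :
    (∑ X : Finset (Fin n), if X ⊆ Y ∧ P X then f X else 0)
      = ∑ X ∈ Y.powerset, if P X then f X else 0 := by
  rw [show Y.powerset = Finset.univ.filter (fun X => X ⊆ Y) from by ext X; simp,
    Finset.sum_filter]
  refine Finset.sum_congr rfl fun X _ => ?_
  by_cases h1 : X ⊆ Y <;> by_cases h2 : P X <;> simp [h1, h2]

lemma aux_powK {n : ℕ} (c0 c1 : Prop) [Decidable c0] [Decidable c1] (Y : Finset (Fin n))
    (P : Finset (Fin n) → Prop) [DecidablePred P] (f : Finset (Fin n) → ℕ) :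
    (∑ X : Finset (Fin n), if c0 ∧ c1 ∧ X ⊆ Y ∧ P X then f X else 0)
      = if c0 ∧ c1 then ∑ X ∈ Y.powerset, if P X then f X else 0 else 0 := by
  by_cases h0 : c0 <;> by_cases h1 : c1 <;> simp [h0, h1]
  exact aux_pows Y P f

lemma aux_powB {n : ℕ} (c0 : Prop) [Decidable c0] (Y : Finset (Fin n))
    (f : Finset (Fin n) → ℕ) :
    (∑ X : Finset (Fin n), if c0 ∧ X ⊆ Y then f X else 0)
      = if c0 then ∑ X ∈ Y.powerset, f X else 0 := by
  by_cases h0 : c0 <;> simp [h0]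
  have := aux_pows Y (fun _ => True) f
  simpa using this

lemma aux_powA {n : ℕ} (Y : Finset (Fin n)) (f : Finset (Fin n) → ℕ) :
    (∑ X : Finset (Fin n), if X ⊆ Y then f X else 0) = ∑ X ∈ Y.powerset, f X := by
  have := aux_pows Y (fun _ => True) f
  simpa using this

lemma aux_ksum (m e : ℕ) (f : ℕ → ℕ) (hf : ∀ k, m < k → f k = 0) :
    (∑ k ∈ Finset.range (m+1), if k ≤ e then f k else 0)
      = ∑ k ∈ Finset.range (e+1), f k := by
  have h1 : (∑ k ∈ Finset.range (m+1), if k ≤ e then f k else 0)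
      = ∑ k ∈ Finset.range (max m e + 1), if k ≤ e then f k else 0 := by
    refine Finset.sum_subset (by intro x hx; simp at hx ⊢; omega) ?_
    intro k hk hk'
    simp at hk hk'
    have : m < k := by omega
    simp [hf k this]
  have h2 : (∑ k ∈ Finset.range (max m e + 1), if k ≤ e then f k else 0)
      = ∑ k ∈ Finset.range (e+1), if k ≤ e then f k else 0 := by
    refine (Finset.sum_subset (by intro x hx; simp at hx ⊢; omega) ?_).symm
    intro k hk hk'
    simp at hk hk'
    rw [if_neg (by omega)]
  rw [h1, h2]
  refine Finset.sum_congr rfl fun k hk => ?_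
  simp at hk
  rw [if_pos (by omega)]

set_option maxHeartbeats 1600000

/-- Exact size of the intersection of two `s`-substitution balls of `q`-ary sequences
(`q > 2`) of length `n` at Hamming distance `d` with `1 ≤ d ≤ 2s`.  Here
`η_{i,j} = (q−2)^{d−i−j} · ∑_{k=0}^{s−d+min{i,j}} C(n−d, k)·(q−1)^k`; the inner upper
limit `s − d + min{i,j}` is written as `s + min i j - d` (nonnegative for the `i, j`
in the stated ranges), and sums with negative upper limit are empty by convention. -/
theorem stmt4 (q n s : ℕ) (hq : 2 < q) (hs : 1 ≤ s) (u u' : Fin n → Fin q)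
    (d : ℕ) (hd : hammingDist u u' = d) (hd1 : 1 ≤ d) (hd2 : d ≤ 2 * s) :
    {v : Fin n → Fin q | hammingDist v u ≤ s ∧ hammingDist v u' ≤ s}.ncard
      = if d ≤ s then
          ∑ i ∈ Finset.range (d + 1), ∑ j ∈ Finset.range (d - i + 1),
            Nat.choose d i * Nat.choose (d - i) j *
              ((q - 2) ^ (d - i - j) *
                ∑ k ∈ Finset.range (s + min i j - d + 1),
                  Nat.choose (n - d) k * (q - 1) ^ k)
        else
          ∑ i ∈ Finset.Icc (d - s) s, ∑ j ∈ Finset.Icc (d - s) (d - i),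
            Nat.choose d i * Nat.choose (d - i) j *
              ((q - 2) ^ (d - i - j) *
                ∑ k ∈ Finset.range (s + min i j - d + 1),
                  Nat.choose (n - d) k * (q - 1) ^ k) := by
  classical
  set D : Finset (Fin n) := Finset.univ.filter (fun x => u x ≠ u' x) with hDdef
  have hDcard : #D = d := hd
  have hdn : d ≤ n := by
    rw [← hDcard]; exact le_trans (Finset.card_le_univ D) (by simp)
  have hDc : #(Dᶜ) = n - d := by rw [Finset.card_compl, hDcard]; simp
  have hDne : ∀ x ∈ D, u x ≠ u' x := fun x hx => by simpa [hDdef] using hx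
  have hDcne : ∀ x ∈ Dᶜ, u x = u' x := fun x hx => by simp [hDdef] at hx; exact hx
  have dist1 : ∀ v : Fin n → Fin q,
      hammingDist v u = d - #(D.filter fun x => v x = u x) + #(Dᶜ.filter fun x => v x ≠ u x) :=
    fun v => by rw [aux_split v u D, hDcard]
  have dist2 : ∀ v : Fin n → Fin q,
      hammingDist v u' = d - #(D.filter fun x => v x = u' x) + #(Dᶜ.filter fun x => v x ≠ u x) := by
    intro v
    rw [aux_split v u' D, hDcard]
    congr 2
    apply Finset.filter_congr
    intro x hx
    simp [hDcne x hx]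
  -- the set as a finset
  set F := Finset.univ.filter
      (fun v : Fin n → Fin q => hammingDist v u ≤ s ∧ hammingDist v u' ≤ s) with hF
  set χ : (Fin n → Fin q) → Finset (Fin n) × Finset (Fin n) × Finset (Fin n) :=
    fun v => (D.filter fun x => v x = u x, D.filter fun x => v x = u' x,
      Dᶜ.filter fun x => v x ≠ u x) with hχ
  set T := Finset.univ.filter
      (fun t : Finset (Fin n) × Finset (Fin n) × Finset (Fin n) =>
        t.1 ⊆ D ∧ t.2.1 ⊆ D \ t.1 ∧ t.2.2 ⊆ Dᶜ ∧
          d - #t.1 + #t.2.2 ≤ s ∧ d - #t.2.1 + #t.2.2 ≤ s) with hT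
  have hmaps : ∀ v ∈ F, χ v ∈ T := by
    intro v hv
    simp only [hF, Finset.mem_filter, Finset.mem_univ, true_and] at hv
    simp only [hT, Finset.mem_filter, Finset.mem_univ, true_and, hχ]
    refine ⟨Finset.filter_subset _ _, ?_, Finset.filter_subset _ _, ?_, ?_⟩
    · intro x hx
      simp only [Finset.mem_filter] at hx
      simp only [Finset.mem_sdiff, Finset.mem_filter]
      exact ⟨hx.1, fun h => hDne x hx.1 (h.2 ▸ hx.2 ▸ rfl)⟩
    · rw [← dist1 v]; exact hv.1
    · rw [← dist2 v]; exact hv.2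
  have hfiber : ∀ t ∈ T, #(F.filter fun v => χ v = t)
      = (q-2)^(d - #t.1 - #t.2.1) * (q-1)^(#t.2.2) := by
    rintro ⟨A, B, K⟩ ht
    simp only [hT, Finset.mem_filter, Finset.mem_univ, true_and] at ht
    obtain ⟨hA, hB, hK, hc1, hc2⟩ := ht
    have hBD : B ⊆ D := hB.trans Finset.sdiff_subset
    have hABd : Disjoint A B := (Finset.disjoint_of_subset_left hB Finset.sdiff_disjoint).symm
    have hKD : ∀ x ∈ K, x ∉ D := fun x hx => by simpa using hK hx
    have hFf : F.filter (fun v => χ v = (A, B, K))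
        = Finset.univ.filter (fun v : Fin n → Fin q => χ v = (A, B, K)) := by
      ext v
      simp only [Finset.mem_filter, Finset.mem_univ, true_and, hF]
      constructor
      · exact fun h => h.2
      · intro h
        refine ⟨⟨?_, ?_⟩, h⟩
        · rw [dist1 v, show (D.filter fun x => v x = u x) = A from congrArg Prod.fst h,
            show (Dᶜ.filter fun x => v x ≠ u x) = K from congrArg (fun t => t.2.2) h]
          exact hc1
        · rw [dist2 v, show (D.filter fun x => v x = u' x) = B from congrArg (fun t => t.2.1) h,
            show (Dᶜ.filter fun x => v x ≠ u x) = K from congrArg (fun t => t.2.2) h]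
          exact hc2
    set S : Fin n → Finset (Fin q) := fun x =>
      if x ∈ A then {u x} else if x ∈ B then {u' x} else if x ∈ D then {u x, u' x}ᶜ
        else if x ∈ K then {u x}ᶜ else {u x} with hS
    have hkey : ∀ v : Fin n → Fin q, χ v = (A, B, K) ↔ ∀ x, v x ∈ S x := by
      intro v
      rw [hχ]
      simp only [Prod.mk.injEq, Finset.ext_iff, Finset.mem_filter]
      rw [← forall_and, ← forall_and]
      refine forall_congr' fun x => ?_
      by_cases hxD : x ∈ D
      · have hne := hDne x hxD
        have hxK : x ∉ K := fun h => (hKD x h) hxD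
        have hxDc : x ∉ Dᶜ := by simp [hxD]
        have e1 : v x = u x → v x ≠ u' x := fun h => h ▸ hne
        have e2 : v x = u' x → v x ≠ u x := fun h hh => hne (hh.symm.trans h)
        by_cases hxA : x ∈ A
        · have hxB : x ∉ B := Finset.disjoint_left.mp hABd hxA
          simp only [hS, hxA, hxB, hxD, hxK, hxDc, if_true, if_false, Finset.mem_singleton,
            Finset.mem_compl, Finset.mem_insert]
          tauto
        · by_cases hxB : x ∈ B
          · simp only [hS, hxA, hxB, hxD, hxK, hxDc, if_true, if_false, Finset.mem_singleton,
              Finset.mem_compl, Finset.mem_insert]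
            tauto
          · simp only [hS, hxA, hxB, hxD, hxK, hxDc, if_true, if_false, Finset.mem_singleton,
              Finset.mem_compl, Finset.mem_insert]
            tauto
      · have hxA : x ∉ A := fun h => hxD (hA h)
        have hxB : x ∉ B := fun h => hxD (hBD h)
        have hxDc : x ∈ Dᶜ := by simp [hxD]
        by_cases hxK : x ∈ K
        · simp only [hS, hxA, hxB, hxD, hxK, hxDc, if_true, if_false, Finset.mem_singleton,
            Finset.mem_compl, Finset.mem_insert]
          tauto
        · simp only [hS, hxA, hxB, hxD, hxK, hxDc, if_true, if_false, Finset.mem_singleton,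
            Finset.mem_compl, Finset.mem_insert]
          tauto
    have hprod : #(Finset.univ.filter fun v : Fin n → Fin q => χ v = (A, B, K))
        = ∏ x, #(S x) := by
      rw [Finset.filter_congr (fun v _ => hkey v)]
      exact aux_count_pi S
    have hScard : ∀ x, #(S x)
        = (if x ∈ D \ (A ∪ B) then q - 2 else 1) * (if x ∈ K then q - 1 else 1) := by
      intro x
      by_cases hxD : x ∈ D
      · have hxK : x ∉ K := fun h => (hKD x h) hxD
        by_cases hxA : x ∈ A
        · simp [hS, hxA, hxK]
        · by_cases hxB : x ∈ B
          · simp [hS, hxA, hxB, hxK]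
          · have hne := hDne x hxD
            have hpair : #({u x, u' x} : Finset (Fin q)) = 2 := by
              rw [Finset.card_insert_of_notMem (by simp [hne]), Finset.card_singleton]
            simp only [hS, hxA, hxB, hxD, hxK, if_true, if_false]
            rw [Finset.card_compl, hpair, Fintype.card_fin]
            simp [hxA, hxB, hxD, hxK]
      · have hxA : x ∉ A := fun h => hxD (hA h)
        have hxB : x ∉ B := fun h => hxD (hBD h)
        by_cases hxK : x ∈ K
        · simp [hS, hxA, hxB, hxD, hxK, Finset.card_compl]
        · simp [hS, hxA, hxB, hxD, hxK]
    have hABcard : #(D \ (A ∪ B)) = d - #A - #B := by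
      rw [Finset.card_sdiff_of_subset (Finset.union_subset hA hBD),
        Finset.card_union_of_disjoint hABd, hDcard]
      omega
    show #(F.filter fun v => χ v = (A, B, K)) = (q-2)^(d - #A - #B) * (q-1)^(#K)
    calc #(F.filter fun v => χ v = (A, B, K))
        = #(Finset.univ.filter fun v : Fin n → Fin q => χ v = (A, B, K)) := by rw [hFf]
      _ = ∏ x, #(S x) := hprod
      _ = (∏ x, if x ∈ D \ (A ∪ B) then q - 2 else 1) * (∏ x, if x ∈ K then q - 1 else 1) := by
          rw [← Finset.prod_mul_distrib]
          exact Finset.prod_congr rfl fun x _ => hScard x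
      _ = (q-2)^(d - #A - #B) * (q-1)^(#K) := by
          rw [Finset.prod_ite_mem, Finset.prod_ite_mem, Finset.univ_inter, Finset.univ_inter,
            Finset.prod_const, Finset.prod_const, hABcard]
  have hcard : #F = ∑ t ∈ T, (q-2)^(d - #t.1 - #t.2.1) * (q-1)^(#t.2.2) := by
    rw [Finset.card_eq_sum_card_fiberwise hmaps]
    exact Finset.sum_congr rfl hfiber
  have hsum1 : #F = ∑ A ∈ D.powerset, ∑ B ∈ (D \ A).powerset, ∑ K ∈ Dᶜ.powerset,
      (if d - #A + #K ≤ s ∧ d - #B + #K ≤ s then (q-2)^(d - #A - #B) * (q-1)^(#K) else 0) := by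
    rw [hcard, hT, Finset.sum_filter, Fintype.sum_prod_type]
    simp only [Fintype.sum_prod_type]
    refine Eq.trans (Finset.sum_congr rfl fun A _ => Finset.sum_congr rfl fun B _ =>
      aux_powK (A ⊆ D) (B ⊆ D \ A) Dᶜ _ _) ?_
    refine Eq.trans (Finset.sum_congr rfl fun A _ => aux_powB (A ⊆ D) (D \ A) _) ?_
    exact aux_powA D _
  have hsum2 : #F = ∑ i ∈ Finset.range (d+1), Nat.choose d i *
      ∑ j ∈ Finset.range (d - i + 1), Nat.choose (d-i) j *
      ∑ k ∈ Finset.range (n - d + 1), Nat.choose (n-d) k *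
        (if d - i + k ≤ s ∧ d - j + k ≤ s then (q-2)^(d - i - j) * (q-1)^k else 0) := by
    rw [hsum1, Finset.sum_powerset, hDcard]
    refine Finset.sum_congr rfl fun i hi => ?_
    have hAconst : ∀ A ∈ Finset.powersetCard i D,
        (∑ B ∈ (D \ A).powerset, ∑ K ∈ Dᶜ.powerset,
          (if d - #A + #K ≤ s ∧ d - #B + #K ≤ s then (q-2)^(d - #A - #B) * (q-1)^(#K) else 0))
        = ∑ j ∈ Finset.range (d - i + 1), Nat.choose (d-i) j *
            ∑ k ∈ Finset.range (n - d + 1), Nat.choose (n-d) k *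
              (if d - i + k ≤ s ∧ d - j + k ≤ s then (q-2)^(d - i - j) * (q-1)^k else 0) := by
      intro A hA
      obtain ⟨hAsub, hAcard⟩ := Finset.mem_powersetCard.mp hA
      have hDA : #(D \ A) = d - i := by rw [Finset.card_sdiff_of_subset hAsub, hDcard, hAcard]
      rw [Finset.sum_powerset, hDA]
      refine Finset.sum_congr rfl fun j hj => ?_
      have hBconst : ∀ B ∈ Finset.powersetCard j (D \ A),
          (∑ K ∈ Dᶜ.powerset,
            (if d - #A + #K ≤ s ∧ d - #B + #K ≤ s then (q-2)^(d - #A - #B) * (q-1)^(#K) else 0))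
          = ∑ k ∈ Finset.range (n - d + 1), Nat.choose (n-d) k *
              (if d - i + k ≤ s ∧ d - j + k ≤ s then (q-2)^(d - i - j) * (q-1)^k else 0) := by
        intro B hB
        obtain ⟨hBsub, hBcard⟩ := Finset.mem_powersetCard.mp hB
        rw [Finset.sum_powerset, hDc]
        refine Finset.sum_congr rfl fun k hk => ?_
        have hKconst : ∀ K ∈ Finset.powersetCard k Dᶜ,
            (if d - #A + #K ≤ s ∧ d - #B + #K ≤ s then (q-2)^(d - #A - #B) * (q-1)^(#K) else 0)
            = (if d - i + k ≤ s ∧ d - j + k ≤ s then (q-2)^(d - i - j) * (q-1)^k else 0) := by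
          intro K hK
          obtain ⟨hKsub, hKcard⟩ := Finset.mem_powersetCard.mp hK
          rw [hKcard, hAcard, hBcard]
        rw [Finset.sum_congr rfl hKconst, Finset.sum_const, Finset.card_powersetCard, hDc,
          smul_eq_mul]
      rw [Finset.sum_congr rfl hBconst, Finset.sum_const, Finset.card_powersetCard, hDA,
        smul_eq_mul]
    rw [Finset.sum_congr rfl hAconst, Finset.sum_const, Finset.card_powersetCard, hDcard,
      smul_eq_mul]
  have hncard : {v : Fin n → Fin q | hammingDist v u ≤ s ∧ hammingDist v u' ≤ s}.ncard = #F := by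
    have : {v : Fin n → Fin q | hammingDist v u ≤ s ∧ hammingDist v u' ≤ s} = ↑F := by
      ext v; simp [hF]
    rw [this, Set.ncard_coe_finset]
  have kstep : ∀ i j : ℕ, i ≤ d → j ≤ d → d ≤ s + min i j →
      (∑ k ∈ Finset.range (n - d + 1), Nat.choose (n-d) k *
        (if d - i + k ≤ s ∧ d - j + k ≤ s then (q-2)^(d - i - j) * (q-1)^k else 0))
      = (q-2)^(d-i-j) * ∑ k ∈ Finset.range (s + min i j - d + 1),
          Nat.choose (n-d) k * (q-1)^k := by
    intro i j hi hj hds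
    have h1 : (∑ k ∈ Finset.range (n - d + 1), Nat.choose (n-d) k *
        (if d - i + k ≤ s ∧ d - j + k ≤ s then (q-2)^(d-i-j) * (q-1)^k else 0))
        = ∑ k ∈ Finset.range (n - d + 1),
            (if k ≤ s + min i j - d then (q-2)^(d-i-j) * (Nat.choose (n-d) k * (q-1)^k)
              else 0) := by
      refine Finset.sum_congr rfl fun k _ => ?_
      have hiff : (d - i + k ≤ s ∧ d - j + k ≤ s) ↔ k ≤ s + min i j - d := by omega
      by_cases h : k ≤ s + min i j - d
      · rw [if_pos h, if_pos (hiff.mpr h)]; ring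
      · rw [if_neg h, if_neg (fun hh => h (hiff.mp hh)), mul_zero]
    rw [h1, aux_ksum (n-d) (s + min i j - d) _ (fun k hk => by
        simp [Nat.choose_eq_zero_of_lt hk]), Finset.mul_sum]
  rw [hncard, hsum2]
  by_cases hds : d ≤ s
  · rw [if_pos hds]
    refine Finset.sum_congr rfl fun i hi => ?_
    rw [Finset.mul_sum]
    refine Finset.sum_congr rfl fun j hj => ?_
    simp only [Finset.mem_range] at hi hj
    rw [kstep i j (by omega) (by omega) (by omega)]
    ring
  · rw [if_neg hds]
    push_neg at hds
    have hzero : ∀ i j : ℕ, s + min i j < d →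
        (∑ k ∈ Finset.range (n - d + 1), Nat.choose (n-d) k *
          (if d - i + k ≤ s ∧ d - j + k ≤ s then (q-2)^(d - i - j) * (q-1)^k else 0)) = 0 := by
      intro i j h
      refine Finset.sum_eq_zero fun k _ => ?_
      rw [if_neg (by omega), mul_zero]
    have hsubi : Finset.Icc (d-s) s ⊆ Finset.range (d+1) := by
      intro x hx; simp only [Finset.mem_Icc] at hx; simp only [Finset.mem_range]; omega
    have hzi : ∀ i ∈ Finset.range (d+1), i ∉ Finset.Icc (d-s) s →
        (Nat.choose d i * ∑ j ∈ Finset.range (d - i + 1), Nat.choose (d-i) j *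
          ∑ k ∈ Finset.range (n - d + 1), Nat.choose (n-d) k *
            (if d - i + k ≤ s ∧ d - j + k ≤ s then (q-2)^(d - i - j) * (q-1)^k else 0)) = 0 := by
      intro i hi hi'
      simp only [Finset.mem_range] at hi
      simp only [Finset.mem_Icc, not_and, not_le] at hi'
      have hij : i < d - s ∨ s < i := by omega
      have hz : (∑ j ∈ Finset.range (d - i + 1), Nat.choose (d-i) j *
          ∑ k ∈ Finset.range (n - d + 1), Nat.choose (n-d) k *
            (if d - i + k ≤ s ∧ d - j + k ≤ s then (q-2)^(d - i - j) * (q-1)^k else 0)) = 0 := by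
        refine Finset.sum_eq_zero fun j hj => ?_
        simp only [Finset.mem_range] at hj
        rw [hzero i j (by omega), mul_zero]
      rw [hz, mul_zero]
    rw [← Finset.sum_subset hsubi hzi]
    refine Finset.sum_congr rfl fun i hi => ?_
    simp only [Finset.mem_Icc] at hi
    have hsubj : Finset.Icc (d-s) (d-i) ⊆ Finset.range (d-i+1) := by
      intro x hx; simp only [Finset.mem_Icc] at hx; simp only [Finset.mem_range]; omega
    have hzj : ∀ j ∈ Finset.range (d-i+1), j ∉ Finset.Icc (d-s) (d-i) →
        (Nat.choose (d-i) j * ∑ k ∈ Finset.range (n - d + 1), Nat.choose (n-d) k *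
          (if d - i + k ≤ s ∧ d - j + k ≤ s then (q-2)^(d - i - j) * (q-1)^k else 0)) = 0 := by
      intro j hj hj'
      simp only [Finset.mem_range] at hj
      simp only [Finset.mem_Icc, not_and, not_le] at hj'
      rw [hzero i j (by omega), mul_zero]
    rw [← Finset.sum_subset hsubj hzj, Finset.mul_sum]
    refine Finset.sum_congr rfl fun j hj => ?_
    simp only [Finset.mem_Icc] at hj
    rw [kstep i j (by omega) (by omega) (by omega)]
    ring
end

section
/- Let q ≥ 2 and n ≥ 5, and let u, u' ∈ Σ_q^{n−1} with d = d_H(u, u') ∈ {1,2,3,4}. Then the intersection of their 2-substitution balls has size: |B^S_2(u) ∩ B^S_2(u')| = q(q−1)n − 2q² + 3q if d = 1; = 2(q−1)n + q² − 6q + 6 if d = 2; = 6q − 6 if d = 3; and = 6 if d = 4. -/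
open Finset
namespace Stmt5Aux
variable {ι : Type*} [Fintype ι] [DecidableEq ι]

lemma dist_filter {q : ℕ} (v w : ι → Fin q) :
    hammingDist v w = (univ.filter fun i => v i ≠ w i).card := rfl

lemma card_ne_one {q : ℕ} (a : Fin q) : Fintype.card {c : Fin q // c ≠ a} = q - 1 := by
  rw [Fintype.card_subtype]
  rw [Finset.filter_ne' univ a, Finset.card_erase_of_mem (mem_univ _), card_univ, Fintype.card_fin]

lemma card_ne_two {q : ℕ} (a b : Fin q) (hab : a ≠ b) :
    Fintype.card {c : Fin q // c ≠ a ∧ c ≠ b} = q - 2 := by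
  rw [Fintype.card_subtype]
  have h : (univ.filter fun c : Fin q => c ≠ a ∧ c ≠ b) = (univ.erase a).erase b := by
    ext c
    simp only [mem_filter, mem_univ, true_and, mem_erase]
    tauto
  rw [h, Finset.card_erase_of_mem (by simp [Ne.symm hab]),
    Finset.card_erase_of_mem (mem_univ _), card_univ, Fintype.card_fin]
  omega

lemma card_avoid1 {q : ℕ} (x : ι → Fin q) :
    (univ.filter fun f : ι → Fin q => ∀ i, f i ≠ x i).card = (q - 1) ^ Fintype.card ι := by
  rw [← Fintype.card_subtype]
  rw [Fintype.card_congr (Equiv.subtypePiEquivPi (p := fun i (c : Fin q) => c ≠ x i))]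
  rw [Fintype.card_pi]
  simp [card_ne_one]

lemma card_avoid2 {q : ℕ} (x y : ι → Fin q) (hxy : ∀ i, x i ≠ y i) :
    (univ.filter fun f : ι → Fin q => ∀ i, f i ≠ x i ∧ f i ≠ y i).card
      = (q - 2) ^ Fintype.card ι := by
  rw [← Fintype.card_subtype]
  rw [Fintype.card_congr (Equiv.subtypePiEquivPi (p := fun i (c : Fin q) => c ≠ x i ∧ c ≠ y i))]
  rw [Fintype.card_pi]
  have : ∀ i : ι, Fintype.card {c : Fin q // c ≠ x i ∧ c ≠ y i} = q - 2 :=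
    fun i => card_ne_two _ _ (hxy i)
  simp [this]

lemma card_exists_both {q : ℕ} (x y : ι → Fin q) (hxy : ∀ i, x i ≠ y i) :
    (univ.filter fun f : ι → Fin q => (∃ i, f i = x i) ∧ (∃ i, f i = y i)).card
      + (q - 1) ^ Fintype.card ι + (q - 1) ^ Fintype.card ι
      = q ^ Fintype.card ι + (q - 2) ^ Fintype.card ι := by
  classical
  set P : (ι → Fin q) → Prop := fun f => ∃ i, f i = x i with hP
  set Q : (ι → Fin q) → Prop := fun f => ∃ i, f i = y i with hQ
  have h1 : (univ.filter fun f : ι → Fin q => P f ∧ Q f).card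
      + (univ.filter fun f : ι → Fin q => ¬(P f ∧ Q f)).card = q ^ Fintype.card ι := by
    rw [Finset.card_filter_add_card_filter_not, card_univ, Fintype.card_fun,
      Fintype.card_fin]
  have h2 : (univ.filter fun f : ι → Fin q => ¬(P f ∧ Q f))
      = (univ.filter fun f : ι → Fin q => ¬ P f) ∪ (univ.filter fun f : ι → Fin q => ¬ Q f) := by
    ext f; simp only [mem_filter, mem_univ, true_and, mem_union]; tauto
  have h3 := Finset.card_union_add_card_inter
      (univ.filter fun f : ι → Fin q => ¬ P f) (univ.filter fun f : ι → Fin q => ¬ Q f)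
  have h4 : (univ.filter fun f : ι → Fin q => ¬ P f) ∩ (univ.filter fun f : ι → Fin q => ¬ Q f)
      = (univ.filter fun f : ι → Fin q => ∀ i, f i ≠ x i ∧ f i ≠ y i) := by
    ext f
    simp only [mem_inter, mem_filter, mem_univ, true_and, hP, hQ, not_exists]
    exact ⟨fun h i => ⟨h.1 i, h.2 i⟩, fun h => ⟨fun i => (h i).1, fun i => (h i).2⟩⟩
  have e5 : (univ.filter fun f : ι → Fin q => ¬ P f)
      = (univ.filter fun f : ι → Fin q => ∀ i, f i ≠ x i) := by
    ext f; simp [hP, not_exists]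
  have e6 : (univ.filter fun f : ι → Fin q => ¬ Q f)
      = (univ.filter fun f : ι → Fin q => ∀ i, f i ≠ y i) := by
    ext f; simp [hQ, not_exists]
  have h5 : (univ.filter fun f : ι → Fin q => ¬ P f).card = (q - 1) ^ Fintype.card ι := by
    rw [e5, card_avoid1 x]
  have h6 : (univ.filter fun f : ι → Fin q => ¬ Q f).card = (q - 1) ^ Fintype.card ι := by
    rw [e6, card_avoid1 y]
  rw [h2] at h1
  rw [h4, h5, h6, card_avoid2 x y hxy] at h3
  set a := (univ.filter fun f : ι → Fin q => P f ∧ Q f).card with ha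
  set b := ((univ.filter fun f : ι → Fin q => ¬ P f) ∪ (univ.filter fun f : ι → Fin q => ¬ Q f)).card with hb
  omega

lemma dist_lt_card_iff {q : ℕ} (f x : ι → Fin q) :
    hammingDist f x < Fintype.card ι ↔ ∃ i, f i = x i := by
  rw [dist_filter, Finset.card_lt_iff_ne_univ, Ne, Finset.eq_univ_iff_forall]
  simp only [mem_filter, mem_univ, true_and]
  push_neg
  simp

lemma dist_eq_card {q : ℕ} (x y : ι → Fin q) (hxy : ∀ i, x i ≠ y i) :
    hammingDist x y = Fintype.card ι := by
  rw [dist_filter, ← card_univ]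
  congr 1
  exact Finset.filter_true_of_mem fun i _ => hxy i
lemma ball0 {q : ℕ} (w : ι → Fin q) :
    (univ.filter fun g : ι → Fin q => hammingDist g w ≤ 0).card = 1 := by
  have h : (univ.filter fun g : ι → Fin q => hammingDist g w ≤ 0) = {w} := by
    ext g; simp [Nat.le_zero, hammingDist_eq_zero]
  rw [h, card_singleton]

lemma sphere1 {q : ℕ} (w : ι → Fin q) :
    (univ.filter fun g : ι → Fin q => hammingDist g w = 1).card
      = Fintype.card ι * (q - 1) := by
  classical
  have key : ((univ : Finset ι).sigma fun i => univ.filter (· ≠ w i)).card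
      = (univ.filter fun g : ι → Fin q => hammingDist g w = 1).card := by
    apply Finset.card_bij (fun x _ => Function.update w x.1 x.2)
    · rintro ⟨i, c⟩ hx
      simp only [mem_sigma, mem_filter, mem_univ, true_and] at hx
      simp only [mem_filter, mem_univ, true_and]
      have hset : (univ.filter fun j => Function.update w i c j ≠ w j) = {i} := by
        ext j
        simp only [mem_filter, mem_univ, true_and, mem_singleton, Function.update_apply]
        by_cases h : j = i <;> simp [h, hx]
      rw [dist_filter, hset, card_singleton]
    · rintro ⟨i, c⟩ hx ⟨i', c'⟩ hx' heq
      simp only [mem_sigma, mem_filter, mem_univ, true_and] at hx hx'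
      have hii : i = i' := by
        by_contra hne
        have := congrFun heq i
        rw [Function.update_self, Function.update_of_ne (Ne.symm (by exact fun h => hne h.symm))] at this
        exact hx this
      subst hii
      have := congrFun heq i
      rw [Function.update_self, Function.update_self] at this
      simpa using this
    · intro g hg
      simp only [mem_filter, mem_univ, true_and] at hg
      rw [dist_filter] at hg
      obtain ⟨i, hi⟩ := Finset.card_eq_one.mp hg
      have hig : g i ≠ w i := by
        have : i ∈ (univ.filter fun j => g j ≠ w j) := by rw [hi]; exact mem_singleton_self i
        simpa using this
      refine ⟨⟨i, g i⟩, ?_, ?_⟩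
      · simp [hig]
      · funext j
        by_cases h : j = i
        · subst h; simp
        · rw [Function.update_of_ne h]
          by_contra hne
          have : j ∈ (univ.filter fun j => g j ≠ w j) := by
            simp only [mem_filter, mem_univ, true_and]
            exact fun hc => hne hc.symm
          rw [hi, mem_singleton] at this; exact h this
  rw [← key, Finset.card_sigma]
  have : ∀ i : ι, (univ.filter (· ≠ w i)).card = q - 1 := by
    intro i
    rw [Finset.filter_ne' univ (w i), Finset.card_erase_of_mem (mem_univ _), card_univ,
      Fintype.card_fin]
  simp [this, Finset.sum_const, card_univ]

lemma ball1 {q : ℕ} (w : ι → Fin q) :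
    (univ.filter fun g : ι → Fin q => hammingDist g w ≤ 1).card
      = 1 + Fintype.card ι * (q - 1) := by
  classical
  have h1 : (univ.filter fun g : ι → Fin q => hammingDist g w ≤ 1)
      = (univ.filter fun g : ι → Fin q => hammingDist g w ≤ 0)
        ∪ (univ.filter fun g : ι → Fin q => hammingDist g w = 1) := by
    ext g; simp only [mem_filter, mem_univ, true_and, mem_union]; omega
  have hdisj : Disjoint (univ.filter fun g : ι → Fin q => hammingDist g w ≤ 0)
      (univ.filter fun g : ι → Fin q => hammingDist g w = 1) := by
    rw [Finset.disjoint_left]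
    intro g hg hg'
    simp only [mem_filter, mem_univ, true_and] at hg hg'
    omega
  rw [h1, card_union_of_disjoint hdisj, ball0, sphere1]
lemma dist_card {q : ℕ} (v w : ι → Fin q) :
    hammingDist v w = Fintype.card {i // v i ≠ w i} := by
  rw [Fintype.card_subtype]; rfl

lemma dist_split {q : ℕ} (p : ι → Prop) [DecidablePred p] (v w : ι → Fin q) :
    hammingDist v w =
      hammingDist (fun i : {i // p i} => v i) (fun i : {i // p i} => w i) +
      hammingDist (fun i : {i // ¬ p i} => v i) (fun i : {i // ¬ p i} => w i) := by
  rw [dist_card, dist_card, dist_card,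
    Fintype.card_congr (Equiv.subtypeSubtypeEquivSubtypeInter p (fun i => v i ≠ w i)),
    Fintype.card_congr (Equiv.subtypeSubtypeEquivSubtypeInter (fun i => ¬ p i) (fun i => v i ≠ w i)),
    Fintype.card_subtype, Fintype.card_subtype, Fintype.card_subtype]
  have h := Finset.card_filter_add_card_filter_not
      (s := (univ.filter fun i => v i ≠ w i)) (p := p)
  rw [Finset.filter_filter, Finset.filter_filter] at h
  rw [← h]
  congr 1 <;> { congr 1; ext i; simp [mem_filter]; tauto }

lemma count_trivial {q : ℕ} (x y : ι → Fin q) (r : ℕ) (h : Fintype.card ι ≤ r) :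
    (univ.filter fun f : ι → Fin q => hammingDist f x ≤ r ∧ hammingDist f y ≤ r).card
      = q ^ Fintype.card ι := by
  rw [Finset.filter_true_of_mem, card_univ, Fintype.card_fun, Fintype.card_fin]
  intro f _
  exact ⟨le_trans hammingDist_le_card_fintype h, le_trans hammingDist_le_card_fintype h⟩

lemma countA_zero {q : ℕ} (x y : ι → Fin q) (hxy : ∀ i, x i ≠ y i) (h3 : 3 ≤ Fintype.card ι) :
    (univ.filter fun f : ι → Fin q => hammingDist f x ≤ 1 ∧ hammingDist f y ≤ 1).card = 0 := by
  rw [Finset.card_eq_zero, Finset.filter_eq_empty_iff]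
  intro f _
  have ht := hammingDist_triangle x f y
  rw [dist_eq_card x y hxy, hammingDist_comm x f] at ht
  rintro ⟨h1, h2⟩
  omega

lemma count_pred {q : ℕ} (x y : ι → Fin q) (hxy : ∀ i, x i ≠ y i) (hpos : 1 ≤ Fintype.card ι) :
    (univ.filter fun f : ι → Fin q =>
        hammingDist f x ≤ Fintype.card ι - 1 ∧ hammingDist f y ≤ Fintype.card ι - 1).card
      + (q - 1) ^ Fintype.card ι + (q - 1) ^ Fintype.card ι
      = q ^ Fintype.card ι + (q - 2) ^ Fintype.card ι := by
  have hiff : ∀ g z : ι → Fin q,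
      (hammingDist g z ≤ Fintype.card ι - 1) ↔ ∃ i, g i = z i := by
    intro g z
    rw [← dist_lt_card_iff]
    omega
  have e : (univ.filter fun f : ι → Fin q =>
        hammingDist f x ≤ Fintype.card ι - 1 ∧ hammingDist f y ≤ Fintype.card ι - 1)
      = (univ.filter fun f : ι → Fin q => (∃ i, f i = x i) ∧ (∃ i, f i = y i)) := by
    ext f
    simp only [mem_filter, mem_univ, true_and, hiff]
  rw [e]
  exact card_exists_both x y hxy

lemma count_d4 {q : ℕ} (x y : ι → Fin q) (hxy : ∀ i, x i ≠ y i) (hcard : Fintype.card ι = 4) :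
    (univ.filter fun f : ι → Fin q => hammingDist f x ≤ 2 ∧ hammingDist f y ≤ 2).card = 6 := by
  classical
  have main : ∀ f ∈ (univ.filter fun f : ι → Fin q =>
      hammingDist f x ≤ 2 ∧ hammingDist f y ≤ 2),
      (univ.filter fun i => f i = x i).card = 2 ∧ (univ.filter fun i => f i = y i).card = 2
        ∧ ∀ i, f i = x i ∨ f i = y i := by
    intro f hf
    simp only [mem_filter, mem_univ, true_and] at hf
    obtain ⟨hfx, hfy⟩ := hf
    have hA := Finset.card_filter_add_card_filter_not
      (s := (univ : Finset ι)) (p := fun i => f i = x i)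
    have hB := Finset.card_filter_add_card_filter_not
      (s := (univ : Finset ι)) (p := fun i => f i = y i)
    rw [card_univ, hcard] at hA hB
    have hdx : hammingDist f x = (univ.filter fun i => ¬ f i = x i).card := dist_filter f x
    have hdy : hammingDist f y = (univ.filter fun i => ¬ f i = y i).card := dist_filter f y
    rw [hdx] at hfx
    rw [hdy] at hfy
    have hdisj : Disjoint (univ.filter fun i => f i = x i) (univ.filter fun i => f i = y i) := by
      rw [Finset.disjoint_left]
      intro i hi hi'
      simp only [mem_filter, mem_univ, true_and] at hi hi'
      exact hxy i (hi ▸ hi' ▸ rfl)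
    have hcup := Finset.card_union_of_disjoint hdisj
    have hle : ((univ.filter fun i => f i = x i) ∪ (univ.filter fun i => f i = y i)).card ≤ 4 := by
      rw [← hcard, ← card_univ]
      exact Finset.card_le_univ _
    have hax : (univ.filter fun i => f i = x i).card = 2 := by omega
    have hby : (univ.filter fun i => f i = y i).card = 2 := by omega
    refine ⟨hax, hby, ?_⟩
    have huniv : (univ.filter fun i => f i = x i) ∪ (univ.filter fun i => f i = y i) = univ := by
      apply Finset.eq_univ_of_card
      rw [hcup, hcard]
      omega
    intro i
    have : i ∈ (univ.filter fun i => f i = x i) ∪ (univ.filter fun i => f i = y i) := by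
      rw [huniv]; exact mem_univ i
    simp only [mem_union, mem_filter, mem_univ, true_and] at this
    exact this
  have key : (univ.filter fun f : ι → Fin q =>
      hammingDist f x ≤ 2 ∧ hammingDist f y ≤ 2).card
      = (Finset.powersetCard 2 (univ : Finset ι)).card := by
    apply Finset.card_bij' (fun f _ => univ.filter fun i => f i = x i)
      (fun T _ => fun i => if i ∈ T then x i else y i)
    · intro f hf
      rw [Finset.mem_powersetCard_univ]
      exact (main f hf).1
    · intro T hT
      rw [Finset.mem_powersetCard_univ] at hT
      simp only [mem_filter, mem_univ, true_and]
      have ex : (univ.filter fun i => (if i ∈ T then x i else y i) ≠ x i) = univ \ T := by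
        ext i
        simp only [mem_filter, mem_univ, true_and, mem_sdiff]
        by_cases h : i ∈ T <;> simp [h, Ne.symm (hxy i)]
      have ey : (univ.filter fun i => (if i ∈ T then x i else y i) ≠ y i) = T := by
        ext i
        simp only [mem_filter, mem_univ, true_and]
        by_cases h : i ∈ T <;> simp [h, hxy i]
      constructor
      · rw [dist_filter, ex, Finset.card_sdiff_of_subset (Finset.subset_univ T), card_univ, hcard, hT]
      · rw [dist_filter, ey, hT]
    · intro f hf
      funext i
      rcases (main f hf).2.2 i with h | h
      · simp [mem_filter, h]
      · by_cases hx : f i = x i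
        · simp [mem_filter, hx]
        · have hni : i ∉ (univ.filter fun j => f j = x j) := by simp [hx]
          rw [if_neg hni, h]
    · intro T hT
      ext i
      simp only [mem_filter, mem_univ, true_and]
      by_cases h : i ∈ T <;> simp [h, Ne.symm (hxy i)]
  rw [key, Finset.card_powersetCard, card_univ, hcard]
  decide


lemma inner_count {q : ℕ} (w : ι → Fin q) (a b : ℕ) (hab : 1 ≤ a + b) :
    (univ.filter fun g : ι → Fin q =>
        a + hammingDist g w ≤ 2 ∧ b + hammingDist g w ≤ 2).card
      = (if a ≤ 2 ∧ b ≤ 2 then 1 else 0)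
        + (if a ≤ 1 ∧ b ≤ 1 then Fintype.card ι * (q - 1) else 0) := by
  by_cases h1 : a ≤ 1 ∧ b ≤ 1
  · rw [if_pos ⟨le_trans h1.1 one_le_two, le_trans h1.2 one_le_two⟩, if_pos h1]
    have e : (univ.filter fun g : ι → Fin q =>
        a + hammingDist g w ≤ 2 ∧ b + hammingDist g w ≤ 2)
        = (univ.filter fun g : ι → Fin q => hammingDist g w ≤ 1) := by
      ext g
      simp only [mem_filter, mem_univ, true_and]
      omega
    rw [e, ball1]
  · by_cases h2 : a ≤ 2 ∧ b ≤ 2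
    · rw [if_pos h2, if_neg h1]
      have e : (univ.filter fun g : ι → Fin q =>
          a + hammingDist g w ≤ 2 ∧ b + hammingDist g w ≤ 2)
          = (univ.filter fun g : ι → Fin q => hammingDist g w ≤ 0) := by
        ext g
        simp only [mem_filter, mem_univ, true_and]
        omega
      rw [e, ball0]
    · rw [if_neg h2, if_neg h1]
      rw [Finset.card_eq_zero, Finset.filter_eq_empty_iff]
      intro g _
      rintro ⟨hga, hgb⟩
      omega

end Stmt5Aux

open Finset Stmt5Aux in
/-- Sizes of intersections of `2`-substitution balls of two `q`-ary sequences of length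
`n − 1` (with `q ≥ 2`, `n ≥ 5`) at Hamming distance `d ∈ {1, 2, 3, 4}`. -/
theorem stmt5 (q n : ℕ) (hq : 2 ≤ q) (hn : 5 ≤ n) (u u' : Fin (n - 1) → Fin q)
    (d : ℕ) (hd : hammingDist u u' = d) (hd1 : 1 ≤ d) (hd4 : d ≤ 4) :
    ({v : Fin (n - 1) → Fin q | hammingDist v u ≤ 2 ∧ hammingDist v u' ≤ 2}.ncard : ℤ)
      = if d = 1 then (q : ℤ) * ((q : ℤ) - 1) * (n : ℤ) - 2 * (q : ℤ) ^ 2 + 3 * (q : ℤ)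
        else if d = 2 then 2 * ((q : ℤ) - 1) * (n : ℤ) + (q : ℤ) ^ 2 - 6 * (q : ℤ) + 6
        else if d = 3 then 6 * (q : ℤ) - 6
        else 6 := by
  classical
  set p : Fin (n - 1) → Prop := fun i => u i ≠ u' i with hp
  set x : {i // p i} → Fin q := fun i => u i.1 with hx
  set y : {i // p i} → Fin q := fun i => u' i.1 with hy
  set w : {i // ¬ p i} → Fin q := fun i => u i.1 with hwdef
  have hxy : ∀ i : {i // p i}, x i ≠ y i := fun i => i.2
  have hcardα : Fintype.card {i // p i} = d := by
    rw [Fintype.card_subtype]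
    exact hd
  have hcardβ : Fintype.card {i // ¬ p i} = (n - 1) - d := by
    rw [Fintype.card_subtype_compl, hcardα, Fintype.card_fin]
  have h0 : ({v : Fin (n - 1) → Fin q | hammingDist v u ≤ 2 ∧ hammingDist v u' ≤ 2}.ncard)
      = (univ.filter fun v : Fin (n - 1) → Fin q =>
          hammingDist v u ≤ 2 ∧ hammingDist v u' ≤ 2).card := by
    rw [Set.ncard_eq_toFinset_card', Set.toFinset_setOf]
  have hw2 : (fun i : {i // ¬ p i} => u' i.1) = w := by
    funext i
    exact (not_ne_iff.mp i.2).symm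
  have hiff : ∀ v : Fin (n - 1) → Fin q,
      (hammingDist v u ≤ 2 ∧ hammingDist v u' ≤ 2) ↔
      (hammingDist (fun i : {i // p i} => v i.1) x
          + hammingDist (fun i : {i // ¬ p i} => v i.1) w ≤ 2 ∧
        hammingDist (fun i : {i // p i} => v i.1) y
          + hammingDist (fun i : {i // ¬ p i} => v i.1) w ≤ 2) := by
    intro v
    rw [Stmt5Aux.dist_split p v u, Stmt5Aux.dist_split p v u']
    rw [hx, hy, hwdef, hw2]
  have htrans : (univ.filter fun v : Fin (n - 1) → Fin q =>
        hammingDist v u ≤ 2 ∧ hammingDist v u' ≤ 2).card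
      = (univ.filter fun z : ({i // p i} → Fin q) × ({i // ¬ p i} → Fin q) =>
          hammingDist z.1 x + hammingDist z.2 w ≤ 2 ∧
          hammingDist z.1 y + hammingDist z.2 w ≤ 2).card := by
    rw [← Fintype.card_subtype, ← Fintype.card_subtype]
    exact Fintype.card_congr ((Equiv.piEquivPiSubtypeProd p (fun _ => Fin q)).subtypeEquiv
      (fun v => hiff v))
  have hsum : (univ.filter fun z : ({i // p i} → Fin q) × ({i // ¬ p i} → Fin q) =>
          hammingDist z.1 x + hammingDist z.2 w ≤ 2 ∧
          hammingDist z.1 y + hammingDist z.2 w ≤ 2).card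
      = ∑ f : {i // p i} → Fin q,
          (univ.filter fun g : {i // ¬ p i} → Fin q =>
            hammingDist f x + hammingDist g w ≤ 2 ∧
            hammingDist f y + hammingDist g w ≤ 2).card := by
    rw [Finset.card_filter, ← Finset.univ_product_univ, Finset.sum_product]
    exact Finset.sum_congr rfl fun f _ => (Finset.card_filter _ _).symm
  have hab : ∀ f : {i // p i} → Fin q, 1 ≤ hammingDist f x + hammingDist f y := by
    intro f
    have ht := hammingDist_triangle x f y
    have hde : hammingDist x y = d := by
      rw [Stmt5Aux.dist_eq_card x y hxy, hcardα]
    rw [hde, hammingDist_comm x f] at ht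
    omega
  have hinner : ∀ f : {i // p i} → Fin q,
      (univ.filter fun g : {i // ¬ p i} → Fin q =>
        hammingDist f x + hammingDist g w ≤ 2 ∧
        hammingDist f y + hammingDist g w ≤ 2).card
      = (if hammingDist f x ≤ 2 ∧ hammingDist f y ≤ 2 then 1 else 0)
        + (if hammingDist f x ≤ 1 ∧ hammingDist f y ≤ 1 then
            Fintype.card {i // ¬ p i} * (q - 1) else 0) :=
    fun f => Stmt5Aux.inner_count w _ _ (hab f)
  have hsplit : (∑ f : {i // p i} → Fin q,
      ((if hammingDist f x ≤ 2 ∧ hammingDist f y ≤ 2 then 1 else 0)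
        + (if hammingDist f x ≤ 1 ∧ hammingDist f y ≤ 1 then
            Fintype.card {i // ¬ p i} * (q - 1) else 0)))
      = (univ.filter fun f : {i // p i} → Fin q =>
          hammingDist f x ≤ 2 ∧ hammingDist f y ≤ 2).card
        + (univ.filter fun f : {i // p i} → Fin q =>
          hammingDist f x ≤ 1 ∧ hammingDist f y ≤ 1).card
          * (Fintype.card {i // ¬ p i} * (q - 1)) := by
    rw [Finset.sum_add_distrib]
    congr 1
    · rw [Finset.card_filter]
    · rw [← Finset.sum_filter, Finset.sum_const, smul_eq_mul]
  have htotal : ({v : Fin (n - 1) → Fin q |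
        hammingDist v u ≤ 2 ∧ hammingDist v u' ≤ 2}.ncard)
      = (univ.filter fun f : {i // p i} → Fin q =>
          hammingDist f x ≤ 2 ∧ hammingDist f y ≤ 2).card
        + (univ.filter fun f : {i // p i} → Fin q =>
          hammingDist f x ≤ 1 ∧ hammingDist f y ≤ 1).card
          * (Fintype.card {i // ¬ p i} * (q - 1)) := by
    rw [h0, htrans, hsum, Finset.sum_congr rfl fun f _ => hinner f, hsplit]
  set C : ℕ := (univ.filter fun f : {i // p i} → Fin q =>
      hammingDist f x ≤ 2 ∧ hammingDist f y ≤ 2).card with hC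
  set A : ℕ := (univ.filter fun f : {i // p i} → Fin q =>
      hammingDist f x ≤ 1 ∧ hammingDist f y ≤ 1).card with hA
  have hq1 : ((q - 1 : ℕ) : ℤ) = (q : ℤ) - 1 := by omega
  have hq2 : ((q - 2 : ℕ) : ℤ) = (q : ℤ) - 2 := by omega
  have hM : (((n - 1) - d : ℕ) : ℤ) = (n : ℤ) - 1 - (d : ℤ) := by omega
  rw [htotal]
  push_cast
  rw [hcardβ]
  push_cast [hq1, hM]
  interval_cases d
  · -- d = 1
    have hCv : C = q := by
      have h := Stmt5Aux.count_trivial x y 2 (le_of_eq_of_le hcardα (by norm_num))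
      rw [hcardα, pow_one] at h
      exact h
    have hAv : A = q := by
      have h := Stmt5Aux.count_trivial x y 1 (le_of_eq_of_le hcardα (by norm_num))
      rw [hcardα, pow_one] at h
      exact h
    rw [hCv, hAv]
    push_cast
    ring
  · -- d = 2
    have hCv : C = q ^ 2 := by
      have h := Stmt5Aux.count_trivial x y 2 (le_of_eq_of_le hcardα (by norm_num))
      rw [hcardα] at h
      exact h
    have hAv : (A : ℤ) = 2 := by
      have h := Stmt5Aux.count_pred x y hxy (le_of_le_of_eq (by norm_num) hcardα.symm)
      rw [hcardα] at h
      norm_num at h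
      have h' := congrArg (Nat.cast : ℕ → ℤ) h
      push_cast [hq1, hq2] at h'
      rw [hA]
      linear_combination h'
    rw [hCv]
    push_cast
    rw [hAv]
    ring
  · -- d = 3
    have hAv : A = 0 := Stmt5Aux.countA_zero x y hxy (le_of_le_of_eq (by norm_num) hcardα.symm)
    have hCv : (C : ℤ) = 6 * (q : ℤ) - 6 := by
      have h := Stmt5Aux.count_pred x y hxy (le_of_le_of_eq (by norm_num) hcardα.symm)
      rw [hcardα] at h
      norm_num at h
      have h' := congrArg (Nat.cast : ℕ → ℤ) h
      push_cast [hq1, hq2] at h'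
      rw [hC]
      linear_combination h'
    rw [hAv]
    push_cast
    rw [hCv]
    ring
  · -- d = 4
    have hAv : A = 0 := Stmt5Aux.countA_zero x y hxy (le_of_le_of_eq (by norm_num) hcardα.symm)
    have hCv : C = 6 := Stmt5Aux.count_d4 x y hxy hcardα
    rw [hAv, hCv]
    push_cast
    ring
end

section
/- Let u, u' ∈ Σ_q^{n−1} with supp(u−u') = {i_1, i_2}, where i_1 < i_2. Then for any v ∈ Σ_q^{n−1}: v ∈ B^S_2(u) ∩ B^S_2(u') if and only if exactly one of the following mutually exclusive conditions holds: (i) v_k = u_k for every k ∉ {i_1, i_2} (and v_{i_1}, v_{i_2} ∈ Σ_q are arbitrary); or (ii) v_k ≠ u_k for exactly one position k ∉ {i_1, i_2}, and (v_{i_1}, v_{i_2}) ∈ {(u_{i_1}, u'_{i_2}), (u'_{i_1}, u_{i_2})}. -/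
/-!
Outside `{i₁, i₂}` the words `u` and `u'` agree, so `v` has the same number `D` of disagreements
there with both; at each of `i₁, i₂` the symbol of `v` can match at most one of the two distinct
symbols of `u` and `u'`. Hence both distances are at most `2` iff `D = 0`, or `D = 1` and `v`
matches `u` at one of the two positions and `u'` at the other.
-/

open Finset

section TwoPoints

variable {ι β : Type*} [Fintype ι] [DecidableEq ι] [DecidableEq β]

theorem hammingDist_eq_card_off_add_ite (v w : ι → β) {i j : ι} (hij : i ≠ j) :
    hammingDist v w = #{k | k ≠ i ∧ k ≠ j ∧ v k ≠ w k}
      + (if v i = w i then 0 else 1) + (if v j = w j then 0 else 1) := by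
  set P : Finset ι := {i, j} with hP
  have hoff :
      #{k | k ≠ i ∧ k ≠ j ∧ v k ≠ w k} = #{k ∈ {k | v k ≠ w k} | k ∉ P} := by
    congr 1; ext k; simp only [P, mem_filter, mem_univ, mem_insert, mem_singleton]; tauto
  have hpair :
      ({k | v k ≠ w k} : Finset ι).filter (· ∈ P) = P.filter (fun k => v k ≠ w k) := by
    ext; simp [and_comm]
  have hon : #{k ∈ {k | v k ≠ w k} | k ∈ P}
      = (if v i = w i then 0 else 1) + (if v j = w j then 0 else 1) := by
    rw [hpair, hP, insert_eq, filter_union, filter_singleton, filter_singleton]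
    by_cases hi : v i = w i <;> by_cases hj : v j = w j <;> simp [hi, hj, hij]
  rw [hammingDist, ← card_filter_add_card_filter_not (· ∈ P), hon, hoff]
  ring

theorem card_off_eq_of_eqOn_compl {u u' : ι → β} {i j : ι}
    (h : ∀ k, k ≠ i → k ≠ j → u k = u' k) (v : ι → β) :
    #{k | k ≠ i ∧ k ≠ j ∧ v k ≠ u' k} = #{k | k ≠ i ∧ k ≠ j ∧ v k ≠ u k} := by
  congr 1
  exact filter_congr fun k _ =>
    and_congr_right fun hi => and_congr_right fun hj => by rw [h k hi hj]

end TwoPoints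

theorem le_two_and_le_two_iff_xor {β : Type*} [DecidableEq β] (D : ℕ) {x y y' z w w' : β}
    (hy : y ≠ y') (hw : w ≠ w') :
    (D + (if x = y then 0 else 1) + (if z = w then 0 else 1) ≤ 2 ∧
        D + (if x = y' then 0 else 1) + (if z = w' then 0 else 1) ≤ 2) ↔
      Xor' (D = 0) (D = 1 ∧ ((x = y ∧ z = w') ∨ (x = y' ∧ z = w))) := by
  unfold Xor'
  split_ifs <;> grind

theorem stmt7_general (q n : ℕ) (u u' : Fin (n - 1) → Fin q)
    (i1 i2 : Fin (n - 1)) (hlt : i1 < i2)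
    (hsupp : Finset.univ.filter (fun k => u k ≠ u' k) = {i1, i2}) :
    ∀ v : Fin (n - 1) → Fin q,
      (hammingDist v u ≤ 2 ∧ hammingDist v u' ≤ 2) ↔
        Xor'
          (∀ k, k ≠ i1 → k ≠ i2 → v k = u k)
          ((Finset.univ.filter fun k => k ≠ i1 ∧ k ≠ i2 ∧ v k ≠ u k).card = 1 ∧
            ((v i1 = u i1 ∧ v i2 = u' i2) ∨ (v i1 = u' i1 ∧ v i2 = u i2))) := by
  intro v
  have hmem (k) : u k ≠ u' k ↔ k = i1 ∨ k = i2 := by simpa using Finset.ext_iff.1 hsupp k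
  have hagree (k) (h1 : k ≠ i1) (h2 : k ≠ i2) : u k = u' k := by
    by_contra h; exact (hmem k |>.1 h).elim h1 h2
  have hv_off : (∀ k, k ≠ i1 → k ≠ i2 → v k = u k) ↔
      #{k | k ≠ i1 ∧ k ≠ i2 ∧ v k ≠ u k} = 0 := by
    simp [filter_eq_empty_iff]
  rw [hammingDist_eq_card_off_add_ite v u hlt.ne, hammingDist_eq_card_off_add_ite v u' hlt.ne,
    card_off_eq_of_eqOn_compl hagree, hv_off]
  exact le_two_and_le_two_iff_xor _ ((hmem i1).2 (.inl rfl)) ((hmem i2).2 (.inr rfl))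

/-- If `u, u'` are `q`-ary sequences of length `n − 1` with `supp(u − u') = {i₁, i₂}`,
`i₁ < i₂`, then `v ∈ B^S_2(u) ∩ B^S_2(u')` iff exactly one of the following two
(mutually exclusive) conditions holds:
(i) `v` agrees with `u` outside `{i₁, i₂}` (with `v i₁, v i₂` arbitrary); or
(ii) `v` differs from `u` at exactly one position outside `{i₁, i₂}` and
`(v i₁, v i₂) ∈ {(u i₁, u' i₂), (u' i₁, u i₂)}`. -/
theorem stmt7 (q n : ℕ) (hq : 2 ≤ q) (u u' : Fin (n - 1) → Fin q)
    (i1 i2 : Fin (n - 1)) (hlt : i1 < i2)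
    (hsupp : Finset.univ.filter (fun k => u k ≠ u' k) = {i1, i2}) :
    ∀ v : Fin (n - 1) → Fin q,
      (hammingDist v u ≤ 2 ∧ hammingDist v u' ≤ 2) ↔
        Xor'
          (∀ k, k ≠ i1 → k ≠ i2 → v k = u k)
          ((Finset.univ.filter fun k => k ≠ i1 ∧ k ≠ i2 ∧ v k ≠ u k).card = 1 ∧
            ((v i1 = u i1 ∧ v i2 = u' i2) ∨ (v i1 = u' i1 ∧ v i2 = u i2))) :=
  stmt7_general q n u u' i1 i2 hlt hsupp
end

section
/- Let u, u' ∈ Σ_q^{n−1} with supp(u−u') = {i_1, i_2, i_3}, where i_1 < i_2 < i_3. Then for any v ∈ Σ_q^{n−1}: v ∈ B^S_2(u) ∩ B^S_2(u') if and only if v_k = u_k for every k ∉ {i_1, i_2, i_3} and (v_{i_1}, v_{i_2}, v_{i_3}) satisfies one of the following six conditions: (v_{i_2}, v_{i_3}) = (u_{i_2}, u'_{i_3}) with v_{i_1} arbitrary; (v_{i_2}, v_{i_3}) = (u'_{i_2}, u_{i_3}) with v_{i_1} arbitrary; (v_{i_1}, v_{i_3}) = (u_{i_1}, u'_{i_3})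 with v_{i_2} arbitrary; (v_{i_1}, v_{i_3}) = (u'_{i_1}, u_{i_3}) with v_{i_2} arbitrary; (v_{i_1}, v_{i_2}) = (u_{i_1}, u'_{i_2}) with v_{i_3} arbitrary; or (v_{i_1}, v_{i_2}) = (u'_{i_1}, u_{i_2}) with v_{i_3} arbitrary. -/
private lemma hd_le_two' {q m : ℕ} (v u : Fin m → Fin q) (a b : Fin m)
    (h : ∀ k, k ≠ a → k ≠ b → v k = u k) : hammingDist v u ≤ 2 := by
  have hsub : Finset.univ.filter (fun k => v k ≠ u k) ⊆ {a, b} := by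
    intro k hk
    simp only [Finset.mem_filter, Finset.mem_univ, true_and] at hk
    simp only [Finset.mem_insert, Finset.mem_singleton]
    by_contra hc
    push_neg at hc
    exact hk (h k hc.1 hc.2)
  have h1 := Finset.card_le_card hsub
  have hcard : ({a, b} : Finset (Fin m)).card ≤ 2 :=
    (Finset.card_insert_le a {b}).trans (by simp)
  simpa [hammingDist] using h1.trans hcard

/-- If `u, u'` are `q`-ary sequences of length `n − 1` with
`supp(u − u') = {i₁, i₂, i₃}`, `i₁ < i₂ < i₃`, then `v ∈ B^S_2(u) ∩ B^S_2(u')` iff `v`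
agrees with `u` outside `{i₁, i₂, i₃}` and `(v i₁, v i₂, v i₃)` matches one of the six
patterns: `(·, u i₂, u' i₃)`, `(·, u' i₂, u i₃)`, `(u i₁, ·, u' i₃)`, `(u' i₁, ·, u i₃)`,
`(u i₁, u' i₂, ·)`, `(u' i₁, u i₂, ·)` (a `·` entry being arbitrary). -/
theorem stmt8 (q n : ℕ) (hq : 2 ≤ q) (u u' : Fin (n - 1) → Fin q)
    (i1 i2 i3 : Fin (n - 1)) (h12 : i1 < i2) (h23 : i2 < i3)
    (hsupp : Finset.univ.filter (fun k => u k ≠ u' k) = {i1, i2, i3}) :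
    ∀ v : Fin (n - 1) → Fin q,
      (hammingDist v u ≤ 2 ∧ hammingDist v u' ≤ 2) ↔
        ((∀ k, k ≠ i1 → k ≠ i2 → k ≠ i3 → v k = u k) ∧
          ((v i2 = u i2 ∧ v i3 = u' i3) ∨
           (v i2 = u' i2 ∧ v i3 = u i3) ∨
           (v i1 = u i1 ∧ v i3 = u' i3) ∨
           (v i1 = u' i1 ∧ v i3 = u i3) ∨
           (v i1 = u i1 ∧ v i2 = u' i2) ∨
           (v i1 = u' i1 ∧ v i2 = u i2))) := by
  intro v
  have hne12 : i1 ≠ i2 := ne_of_lt h12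
  have hne23 : i2 ≠ i3 := ne_of_lt h23
  have hne13 : i1 ≠ i3 := ne_of_lt (h12.trans h23)
  have hmem : ∀ j : Fin (n - 1), j ∈ ({i1, i2, i3} : Finset (Fin (n-1))) → u j ≠ u' j := by
    intro j hj
    rw [← hsupp] at hj
    simpa using hj
  have hu1 : u i1 ≠ u' i1 := hmem i1 (by simp)
  have hu2 : u i2 ≠ u' i2 := hmem i2 (by simp)
  have hu3 : u i3 ≠ u' i3 := hmem i3 (by simp)
  have hout : ∀ k, k ≠ i1 → k ≠ i2 → k ≠ i3 → u k = u' k := by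
    intro k h1 h2 h3
    by_contra h
    have : k ∈ ({i1, i2, i3} : Finset (Fin (n-1))) := by
      rw [← hsupp]; simp [h]
    simp only [Finset.mem_insert, Finset.mem_singleton] at this
    tauto
  set S : Finset (Fin (n-1)) := {i1, i2, i3} with hS
  set D : Finset (Fin (n-1)) := Finset.univ.filter (fun k => v k ≠ u k) with hD
  set D' : Finset (Fin (n-1)) := Finset.univ.filter (fun k => v k ≠ u' k) with hD'
  have hdv : hammingDist v u = D.card := rfl
  have hdv' : hammingDist v u' = D'.card := rfl
  constructor
  · rintro ⟨hd, hd'⟩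
    rw [hdv] at hd
    rw [hdv'] at hd'
    -- S ⊆ D ∪ D'
    have hSsub : S ⊆ D ∪ D' := by
      intro k hk
      have huk := hmem k hk
      simp only [hD, hD', Finset.mem_union, Finset.mem_filter, Finset.mem_univ, true_and]
      by_contra hc
      push_neg at hc
      exact huk (hc.1 ▸ hc.2 ▸ rfl)
    have hScard : S.card = 3 := by
      rw [hS]
      rw [Finset.card_insert_of_notMem (by simp [hne12, hne13]),
        Finset.card_insert_of_notMem (by simp [hne23]), Finset.card_singleton]
    have h3 : 3 ≤ (D ∩ S).card + (D' ∩ S).card := by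
      have hsub2 : S ⊆ (D ∩ S) ∪ (D' ∩ S) := by
        intro k hk
        rcases Finset.mem_union.mp (hSsub hk) with h | h
        · exact Finset.mem_union_left _ (Finset.mem_inter.mpr ⟨h, hk⟩)
        · exact Finset.mem_union_right _ (Finset.mem_inter.mpr ⟨h, hk⟩)
      calc 3 = S.card := hScard.symm
        _ ≤ ((D ∩ S) ∪ (D' ∩ S)).card := Finset.card_le_card hsub2
        _ ≤ _ := Finset.card_union_le _ _
    have hsdiff : D \ S = D' \ S := by
      ext k
      simp only [hD, hD', Finset.mem_sdiff, Finset.mem_filter, Finset.mem_univ, true_and]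
      constructor
      · rintro ⟨hk, hks⟩
        refine ⟨fun h => hk ?_, hks⟩
        have hk1 : k ≠ i1 := fun h' => hks (by simp [hS, h'])
        have hk2 : k ≠ i2 := fun h' => hks (by simp [hS, h'])
        have hk3 : k ≠ i3 := fun h' => hks (by simp [hS, h'])
        rw [h, ← hout k hk1 hk2 hk3]
      · rintro ⟨hk, hks⟩
        refine ⟨fun h => hk ?_, hks⟩
        have hk1 : k ≠ i1 := fun h' => hks (by simp [hS, h'])
        have hk2 : k ≠ i2 := fun h' => hks (by simp [hS, h'])
        have hk3 : k ≠ i3 := fun h' => hks (by simp [hS, h'])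
        rw [h, hout k hk1 hk2 hk3]
    have hDsplit : (D ∩ S).card + (D \ S).card = D.card :=
      Finset.card_inter_add_card_sdiff D S
    have hD'split : (D' ∩ S).card + (D' \ S).card = D'.card :=
      Finset.card_inter_add_card_sdiff D' S
    rw [← hsdiff] at hD'split
    have hzero : (D \ S).card = 0 := by omega
    have hDS : D \ S = ∅ := Finset.card_eq_zero.mp hzero
    have houtv : ∀ k, k ≠ i1 → k ≠ i2 → k ≠ i3 → v k = u k := by
      intro k h1 h2 h3
      by_contra h
      have hkD : k ∈ D := by simp [hD, h]
      have hkS : k ∉ S := by simp [hS, h1, h2, h3]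
      have : k ∈ D \ S := Finset.mem_sdiff.mpr ⟨hkD, hkS⟩
      rw [hDS] at this
      exact absurd this (Finset.notMem_empty k)
    refine ⟨houtv, ?_⟩
    -- v matches u at one of the three positions
    have hA : v i1 = u i1 ∨ v i2 = u i2 ∨ v i3 = u i3 := by
      by_contra hc
      push_neg at hc
      have hsub3 : S ⊆ D := by
        intro k hk
        simp only [hS, Finset.mem_insert, Finset.mem_singleton] at hk
        rcases hk with rfl | rfl | rfl <;> simp [hD, hc.1, hc.2.1, hc.2.2]
      have := (hScard ▸ Finset.card_le_card hsub3)
      omega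
    have hB : v i1 = u' i1 ∨ v i2 = u' i2 ∨ v i3 = u' i3 := by
      by_contra hc
      push_neg at hc
      have hsub3 : S ⊆ D' := by
        intro k hk
        simp only [hS, Finset.mem_insert, Finset.mem_singleton] at hk
        rcases hk with rfl | rfl | rfl <;> simp [hD', hc.1, hc.2.1, hc.2.2]
      have h4 := (hScard ▸ Finset.card_le_card hsub3)
      omega
    rcases hA with hA | hA | hA <;> rcases hB with hB | hB | hB
    · exact absurd (hA.symm.trans hB) hu1
    · exact Or.inr (Or.inr (Or.inr (Or.inr (Or.inl ⟨hA, hB⟩))))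
    · exact Or.inr (Or.inr (Or.inl ⟨hA, hB⟩))
    · exact Or.inr (Or.inr (Or.inr (Or.inr (Or.inr ⟨hB, hA⟩))))
    · exact absurd (hA.symm.trans hB) hu2
    · exact Or.inl ⟨hA, hB⟩
    · exact Or.inr (Or.inr (Or.inr (Or.inl ⟨hB, hA⟩)))
    · exact Or.inr (Or.inl ⟨hB, hA⟩)
    · exact absurd (hA.symm.trans hB) hu3
  · rintro ⟨houtv, hpat⟩
    have houtv' : ∀ k, k ≠ i1 → k ≠ i2 → k ≠ i3 → v k = u' k := by
      intro k h1 h2 h3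
      rw [houtv k h1 h2 h3]
      exact hout k h1 h2 h3
    rcases hpat with ⟨h1, h2⟩ | ⟨h1, h2⟩ | ⟨h1, h2⟩ | ⟨h1, h2⟩ | ⟨h1, h2⟩ | ⟨h1, h2⟩
    · exact ⟨hd_le_two' v u i1 i3 (fun k ha hb => by
          by_cases hk : k = i2
          · subst hk; exact h1
          · exact houtv k ha hk hb),
        hd_le_two' v u' i1 i2 (fun k ha hb => by
          by_cases hk : k = i3
          · subst hk; exact h2
          · exact houtv' k ha hb hk)⟩
    · exact ⟨hd_le_two' v u i1 i2 (fun k ha hb => by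
          by_cases hk : k = i3
          · subst hk; exact h2
          · exact houtv k ha hb hk),
        hd_le_two' v u' i1 i3 (fun k ha hb => by
          by_cases hk : k = i2
          · subst hk; exact h1
          · exact houtv' k ha hk hb)⟩
    · exact ⟨hd_le_two' v u i2 i3 (fun k ha hb => by
          by_cases hk : k = i1
          · subst hk; exact h1
          · exact houtv k hk ha hb),
        hd_le_two' v u' i1 i2 (fun k ha hb => by
          by_cases hk : k = i3
          · subst hk; exact h2
          · exact houtv' k ha hb hk)⟩
    · exact ⟨hd_le_two' v u i1 i2 (fun k ha hb => by
          by_cases hk : k = i3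
          · subst hk; exact h2
          · exact houtv k ha hb hk),
        hd_le_two' v u' i2 i3 (fun k ha hb => by
          by_cases hk : k = i1
          · subst hk; exact h1
          · exact houtv' k hk ha hb)⟩
    · exact ⟨hd_le_two' v u i2 i3 (fun k ha hb => by
          by_cases hk : k = i1
          · subst hk; exact h1
          · exact houtv k hk ha hb),
        hd_le_two' v u' i1 i3 (fun k ha hb => by
          by_cases hk : k = i2
          · subst hk; exact h2
          · exact houtv' k ha hk hb)⟩
    · exact ⟨hd_le_two' v u i1 i3 (fun k ha hb => by
          by_cases hk : k = i2
          · subst hk; exact h2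
          · exact houtv k ha hk hb),
        hd_le_two' v u' i2 i3 (fun k ha hb => by
          by_cases hk : k = i1
          · subst hk; exact h1
          · exact houtv' k hk ha hb)⟩
end

section
/- Let x, x' ∈ Σ_q^n with supp(x−x') = {i_1 < i_2 < ⋯ < i_d}, d ≥ 2; let 0 = j_0 < j_1 < ⋯ < j_m = n be the right endpoints of the runs of x and 0 = j'_0 < j'_1 < ⋯ < j'_{m'} = n the right endpoints of the runs of x'. If i ∈ [m] and i' ∈ [m'] are such that supp(x−x') ∩ [min(j_i, j'_{i'}), max(j_i, j'_{i'})] = ∅, then d_H(x_{[n]∖{j_i}}, x'_{[n]∖{j'_{i'}}}) ≥ d; in particular, for no d' < d does such a pair satisfy d_H(x_{[n]∖{j_i}}, x'_{[n]∖{j'_{i'}}}) = d'. -/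
/-!
Deleting position `a` of `x` and position `b` of `x'` keeps the positions left of
`min a b` in place and moves those right of `max a b` one step left, in both sequences
alike. Since `supp(x − x')` misses `[min a b, max a b]`, its `d` positions land on `d`
distinct positions where the deleted sequences still differ.
-/

/-- Sequences of length `n` are modelled as functions `ℕ → Fin q` whose relevant
positions are `1, …, n` (1-based, as in the paper). `delN x j` deletes position `j`. -/
def delN {q : ℕ} (x : ℕ → Fin q) (j : ℕ) : ℕ → Fin q :=
  fun i => if i < j then x i else x (i + 1)

/-- Hamming distance between two length-`n` sequences (positions `1, …, n`). -/
def hdist {q : ℕ} (n : ℕ) (u v : ℕ → Fin q) : ℕ :=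
  ((Finset.Icc 1 n).filter fun i => u i ≠ v i).card

/-- `j 0 = 0 < j 1 < ⋯ < j m = n` are the right endpoints of the runs of the
length-`n` sequence `x`: each block `x_{[j_{i−1}+1, j_i]}` is constant and adjacent
blocks carry different symbols. -/
def IsRunDecomp {q : ℕ} (n m : ℕ) (x : ℕ → Fin q) (j : ℕ → ℕ) : Prop :=
  j 0 = 0 ∧ j m = n ∧ (∀ i, i < m → j i < j (i + 1)) ∧
  (∀ i, 1 ≤ i → i ≤ m → ∀ a b, j (i - 1) + 1 ≤ a → a ≤ j i →
      j (i - 1) + 1 ≤ b → b ≤ j i → x a = x b) ∧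
  (∀ i, 1 ≤ i → i < m → x (j i) ≠ x (j i + 1))

open Finset

section Deletion

variable {q : ℕ} {x : ℕ → Fin q} {j s : ℕ}

theorem delN_apply_of_lt (h : s < j) : delN x j s = x s := if_pos h

theorem delN_apply_of_le (h : j ≤ s) : delN x j s = x (s + 1) := if_neg (Nat.not_lt.2 h)

theorem hdist_le_hdist_delN {n a b : ℕ} {u v : ℕ → Fin q} (ha1 : 1 ≤ a) (han : a ≤ n)
    (hdisj : Disjoint ((Icc 1 n).filter fun k => u k ≠ v k) (Icc (min a b) (max a b))) :
    hdist n u v ≤ hdist (n - 1) (delN u a) (delN v b) := by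
  have houtside : ∀ s ∈ (Icc 1 n).filter fun k => u k ≠ v k, s < min a b ∨ max a b < s := by
    intro s hs
    by_contra! hin
    exact disjoint_left.1 hdisj hs (mem_Icc.2 hin)
  refine card_le_card_of_injOn (fun s => if s < min a b then s else s - 1) ?_ ?_
  · intro s hs
    have hside := houtside s hs
    simp only [mem_coe, mem_filter, mem_Icc] at hs ⊢
    obtain ⟨⟨hs1, hsn⟩, hne⟩ := hs
    rcases hside with hleft | hright
    · rw [if_pos hleft, delN_apply_of_lt (by omega), delN_apply_of_lt (by omega)]
      exact ⟨⟨hs1, by omega⟩, hne⟩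
    · rw [if_neg (by omega), delN_apply_of_le (by omega), delN_apply_of_le (by omega),
        Nat.sub_add_cancel (by omega)]
      exact ⟨⟨by omega, by omega⟩, hne⟩
  · intro s hs t ht hst
    have := houtside s hs
    have := houtside t ht
    simp only at hst
    split_ifs at hst <;> omega

end Deletion

namespace IsRunDecomp

variable {q n m : ℕ} {x : ℕ → Fin q} {j : ℕ → ℕ}

theorem strictMonoOn (h : IsRunDecomp n m x j) : StrictMonoOn j (Set.Iic m) :=
  strictMonoOn_Iic_of_lt_succ fun k hk => by
    simpa only [Order.succ_eq_add_one] using h.2.2.1 k hk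

theorem endpoint_mem_Icc (h : IsRunDecomp n m x j) {i : ℕ} (hi1 : 1 ≤ i) (him : i ≤ m) :
    j i ∈ Icc 1 n := by
  have hpos : j 0 < j i :=
    h.strictMonoOn (Set.mem_Iic.2 (Nat.zero_le m)) (Set.mem_Iic.2 him) (by omega)
  have hle : j i ≤ j m := h.strictMonoOn.monotoneOn (Set.mem_Iic.2 him) (Set.mem_Iic.2 le_rfl) him
  rw [h.1] at hpos
  rw [h.2.1] at hle
  exact mem_Icc.2 ⟨hpos, hle⟩

end IsRunDecomp

theorem stmt10_general (q n m d : ℕ)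
    (x x' : ℕ → Fin q)
    (hsupp : ((Finset.Icc 1 n).filter fun k => x k ≠ x' k).card = d)
    (j j' : ℕ → ℕ)
    (hx : IsRunDecomp n m x j)
    (i i' : ℕ) (hi1 : 1 ≤ i) (him : i ≤ m)
    (hempty : ((Finset.Icc 1 n).filter fun k => x k ≠ x' k) ∩
        Finset.Icc (min (j i) (j' i')) (max (j i) (j' i')) = ∅) :
    d ≤ hdist (n - 1) (delN x (j i)) (delN x' (j' i')) := by
  obtain ⟨hji1, hjin⟩ := mem_Icc.1 (hx.endpoint_mem_Icc hi1 him)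
  rw [← hsupp]
  exact hdist_le_hdist_delN hji1 hjin (disjoint_iff_inter_eq_empty.2 hempty)

/-- If `d = |supp(x − x')| ≥ 2` and the run endpoints `j_i` of `x` and `j'_{i'}` of `x'`
satisfy `supp(x − x') ∩ [min(j_i, j'_{i'}), max(j_i, j'_{i'})] = ∅`, then the Hamming
distance of the two deleted sequences `x_{[n]∖{j_i}}` and `x'_{[n]∖{j'_{i'}}}` is at
least `d`; in particular it is never equal to any `d' < d`. -/
theorem stmt10 (q n m m' d : ℕ) (hq : 2 ≤ q) (hd : 2 ≤ d)
    (x x' : ℕ → Fin q)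
    (hsupp : ((Finset.Icc 1 n).filter fun k => x k ≠ x' k).card = d)
    (j j' : ℕ → ℕ)
    (hx : IsRunDecomp n m x j) (hx' : IsRunDecomp n m' x' j')
    (i i' : ℕ) (hi1 : 1 ≤ i) (him : i ≤ m) (hi'1 : 1 ≤ i') (him' : i' ≤ m')
    (hempty : ((Finset.Icc 1 n).filter fun k => x k ≠ x' k) ∩
        Finset.Icc (min (j i) (j' i')) (max (j i) (j' i')) = ∅) :
    d ≤ hdist (n - 1) (delN x (j i)) (delN x' (j' i')) :=
  stmt10_general q n m d x x' hsupp j j' hx i i' hi1 him hempty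
end

section
/- Let x, x' ∈ Σ_q^n with supp(x−x') = {i_1 < i_2 < ⋯ < i_d}, d ≥ 2, and set i_0 = 0 and i_{d+1} = n+1; let 0 = j_0 < j_1 < ⋯ < j_m = n be the right endpoints of the runs of x and 0 = j'_0 < j'_1 < ⋯ < j'_{m'} = n the right endpoints of the runs of x'. Fix λ, λ' ∈ [d] with λ ≤ λ', and let S = |supp(x−x') ∖ [i_λ, i_{λ'}]| and Δ = |{i ∈ [i_λ, i_{λ'}−1] : x'_i ≠ x_{i+1}}|. Then: (a) if d' < S + Δ, there is no pair (j_i, j'_{i'}) with i_{λ−1} < j_i ≤ i_λ ≤ i_{λ'} ≤ j'_{i'} < i_{λ'+1} and d_H(x_{[n]∖{j_i}}, x'_{[n]∖{j'_{i'}}}) = d'; and (b) if d' ≥ S + Δ, the number of pairs (j_i, j'_{i'}) with i_{λ−1} < j_i ≤ i_λ ≤ i_{λ'} ≤ j'_{i'} < i_{λ'+1} and d_H(x_{[n]∖{j_i}}, x'_{[n]∖{j'_{i'}}}) = d' is at most d' − S − Δ + 1. -/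
/-! Deleting position `a` from `x` and position `b ≥ a` from `x'` compares `x k` with `x' k`
left of `a` and right of `b`, and `x (k + 1)` with `x' k` on `[a, b)`. Since `x` and `x'` agree
strictly between consecutive support positions, for run endpoints `a`, `b` in the windows of the
statement this distance is `S + Δ + L a + R b`, where `L a` and `R b` count the positions `k`
with `x' k ≠ x (k + 1)` in `[a, i_λ)` and `[i_{λ'}, b)`. Every such run endpoint is itself one of
these positions, so `L` strictly decreases and `R` strictly increases along run endpoints. Hence
the distance is at least `S + Δ`, and a pair at distance `d'` is determined by
`L a ∈ [0, d' - S - Δ]`.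
-/

open Finset

section Counting

variable {p : ℕ → Prop} [DecidablePred p]

lemma card_filter_Ico_add_card_filter_Ico {a b c : ℕ} (hab : a ≤ b) (hbc : b ≤ c) :
    #{k ∈ Ico a b | p k} + #{k ∈ Ico b c | p k} = #{k ∈ Ico a c | p k} := by
  rw [← card_union_of_disjoint (disjoint_filter_filter (Ico_disjoint_Ico_consecutive a b c)),
    ← filter_union, Ico_union_Ico_eq_Ico hab hbc]

lemma card_filter_Ico_lt_of_lt_left {a b c : ℕ} (hab : a < b) (hbc : b ≤ c) (ha : p a) :
    #{k ∈ Ico b c | p k} < #{k ∈ Ico a c | p k} := by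
  rw [← card_filter_Ico_add_card_filter_Ico hab.le hbc]
  have : 0 < #{k ∈ Ico a b | p k} := card_pos.2 ⟨a, by simp [hab, ha]⟩
  omega

lemma card_filter_Ico_lt_of_lt_right {a b c : ℕ} (hca : c ≤ a) (hab : a < b) (ha : p a) :
    #{k ∈ Ico c a | p k} < #{k ∈ Ico c b | p k} := by
  rw [← card_filter_Ico_add_card_filter_Ico hca hab.le]
  have : 0 < #{k ∈ Ico a b | p k} := card_pos.2 ⟨a, by simp [hab, ha]⟩
  omega

end Counting

lemma card_le_succ_of_add_eq {α β : Type*} (P : Finset (α × β)) (f : α → ℕ) (g : β → ℕ)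
    {c : ℕ} (hf : Set.InjOn f (Prod.fst '' (P : Set (α × β))))
    (hg : Set.InjOn g (Prod.snd '' (P : Set (α × β))))
    (hc : ∀ p ∈ P, f p.1 + g p.2 = c) : #P ≤ c + 1 := by
  calc #P ≤ #(range (c + 1)) := card_le_card_of_injOn (fun p => f p.1)
          (fun p hp => mem_range.2 (show f p.1 < c + 1 by have := hc p hp; omega)) ?_
    _ = c + 1 := card_range _
  intro p hp p' hp' (h : f p.1 = f p'.1)
  have h1 : p.1 = p'.1 := hf (Set.mem_image_of_mem _ hp) (Set.mem_image_of_mem _ hp') h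
  have h2 : g p.2 = g p'.2 := by have := hc p hp; have := hc p' hp'; omega
  exact Prod.ext h1 (hg (Set.mem_image_of_mem _ hp) (Set.mem_image_of_mem _ hp') h2)

section Deletion

variable {q : ℕ} (x x' : ℕ → Fin q)

lemma hdist_delN_delN {n a b : ℕ} (ha : 1 ≤ a) (hab : a ≤ b) (hbn : b ≤ n) :
    hdist (n - 1) (delN x a) (delN x' b) =
      #{k ∈ Ico 1 a | x k ≠ x' k} + #{k ∈ Ico a b | x' k ≠ x (k + 1)} +
        #{k ∈ Ioc b n | x k ≠ x' k} := by
  have hshift : #{k ∈ Ioc b n | x k ≠ x' k} = #{k ∈ Ico b n | x (k + 1) ≠ x' (k + 1)} := by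
    rw [← Ico_add_one_add_one_eq_Ioc, ← map_add_right_Ico, filter_map, card_map]
    rfl
  have hI : Icc 1 (n - 1) = Ico 1 n := by ext; simp; omega
  rw [hdist, hI, ← card_filter_Ico_add_card_filter_Ico ha (hab.trans hbn),
    ← card_filter_Ico_add_card_filter_Ico hab hbn, hshift, add_assoc]
  congr 1
  · refine congrArg card (filter_congr fun k hk => ?_)
    simp only [mem_Ico] at hk
    simp [delN, hk.2, hk.2.trans_le hab]
  congr 1
  · refine congrArg card (filter_congr fun k hk => ?_)
    simp only [mem_Ico] at hk
    simp [delN, hk.2, not_lt.2 hk.1, ne_comm]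
  · refine congrArg card (filter_congr fun k hk => ?_)
    simp only [mem_Ico] at hk
    simp [delN, not_lt.2 hk.1, not_lt.2 (hab.trans hk.1)]

lemma hdist_delN_delN_of_agree {n a b lo hi : ℕ} (ha : 1 ≤ a) (halo : a ≤ lo) (hlohi : lo ≤ hi)
    (hhib : hi ≤ b) (hbn : b ≤ n) (hleft : ∀ k, a ≤ k → k < lo → x k = x' k)
    (hright : ∀ k, hi < k → k ≤ b → x k = x' k) :
    hdist (n - 1) (delN x a) (delN x' b) =
      #({k ∈ Icc 1 n | x k ≠ x' k} \ Icc lo hi) + #{k ∈ Ico lo hi | x' k ≠ x (k + 1)} +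
        #{k ∈ Ico a lo | x' k ≠ x (k + 1)} + #{k ∈ Ico hi b | x' k ≠ x (k + 1)} := by
  have hsupp : {k ∈ Icc 1 n | x k ≠ x' k} \ Icc lo hi =
      {k ∈ Ico 1 a | x k ≠ x' k} ∪ {k ∈ Ioc b n | x k ≠ x' k} := by
    ext k
    simp only [mem_sdiff, mem_union, mem_filter, mem_Icc, mem_Ico, mem_Ioc]
    constructor
    · rintro ⟨⟨hk, hne⟩, hout⟩
      have : k < a ∨ b < k := by
        by_contra! hin
        rcases lt_or_ge k lo with hlo | hlo
        · exact hne (hleft k hin.1 hlo)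
        · exact hne (hright k (by omega) hin.2)
      rcases this with h | h
      · exact Or.inl ⟨⟨hk.1, h⟩, hne⟩
      · exact Or.inr ⟨⟨h, hk.2⟩, hne⟩
    · rintro (⟨hk, hne⟩ | ⟨hk, hne⟩) <;> exact ⟨⟨by omega, hne⟩, by omega⟩
  have hdisj : Disjoint {k ∈ Ico 1 a | x k ≠ x' k} {k ∈ Ioc b n | x k ≠ x' k} :=
    disjoint_filter_filter <| disjoint_left.2 fun k hk hk' => by
      simp only [mem_Ico, mem_Ioc] at hk hk'; omega
  rw [hdist_delN_delN x x' ha (halo.trans (hlohi.trans hhib)) hbn, hsupp,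
    card_union_of_disjoint hdisj, ← card_filter_Ico_add_card_filter_Ico halo (hlohi.trans hhib),
    ← card_filter_Ico_add_card_filter_Ico hlohi hhib]
  ring

variable {x x'}

lemma IsRunDecomp.strictMonoOn_s13 {n m : ℕ} {j : ℕ → ℕ} (hx : IsRunDecomp n m x j) :
    StrictMonoOn j (Set.Iic m) :=
  strictMonoOn_Iic_of_lt_succ fun i hi => hx.2.2.1 i hi

lemma IsRunDecomp.injOn_card_filter_Ico_left {n m a c : ℕ} {j : ℕ → ℕ}
    (hx : IsRunDecomp n m x j) (hagree : ∀ k, a < k → k < c → x k = x' k) :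
    Set.InjOn (fun p => #{k ∈ Ico (j p) c | x' k ≠ x (k + 1)})
      {p | 1 ≤ p ∧ p ≤ m ∧ a < j p ∧ j p ≤ c} := by
  refine StrictAntiOn.injOn ?_
  rintro p ⟨hp1, hpm, hap, -⟩ p' ⟨-, hp'm, -, hp'c⟩ hpp'
  have hj : j p < j p' := hx.strictMonoOn_s13 hpm hp'm hpp'
  refine card_filter_Ico_lt_of_lt_left hj hp'c ?_
  rw [← hagree (j p) hap (hj.trans_le hp'c)]
  exact hx.2.2.2.2 p hp1 (hpp'.trans_le hp'm)

lemma IsRunDecomp.injOn_card_filter_Ico_right {n m c b : ℕ} {j : ℕ → ℕ}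
    (hx' : IsRunDecomp n m x' j) (hagree : ∀ k, c < k → k < b → x k = x' k) :
    Set.InjOn (fun p => #{k ∈ Ico c (j p) | x' k ≠ x (k + 1)})
      {p | 1 ≤ p ∧ p ≤ m ∧ c ≤ j p ∧ j p < b} := by
  refine StrictMonoOn.injOn ?_
  rintro p ⟨hp1, hpm, hcp, -⟩ p' ⟨-, hp'm, -, hp'b⟩ hpp'
  have hj : j p < j p' := hx'.strictMonoOn_s13 hpm hp'm hpp'
  refine card_filter_Ico_lt_of_lt_right hcp hj ?_
  rw [hagree (j p + 1) (by omega) (by omega)]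
  exact hx'.2.2.2.2 p hp1 (hpp'.trans_le hp'm)

lemma eq_of_between_consecutive_support {n d t k : ℕ} {e : ℕ → ℕ}
    (he : StrictMonoOn e (Set.Iic (d + 1))) (htop : e (d + 1) = n + 1)
    (hsupp : {k ∈ Icc 1 n | x k ≠ x' k} = (Icc 1 d).image e) (ht : t ≤ d)
    (hk : e t < k) (hk' : k < e (t + 1)) : x k = x' k := by
  by_contra hne
  have hkn : k ≤ n := by
    have := he.monotoneOn (by simp; omega) (by simp) (show t + 1 ≤ d + 1 by omega)
    omega
  obtain ⟨s, hs, rfl⟩ := mem_image.1 (hsupp ▸ mem_filter.2 ⟨mem_Icc.2 ⟨by omega, hkn⟩, hne⟩)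
  have h1 := (he.lt_iff_lt (by simp; omega) (by simp at hs ⊢; omega)).1 hk
  have h2 := (he.lt_iff_lt (by simp at hs ⊢; omega) (by simp; omega)).1 hk'
  omega

end Deletion

theorem stmt13_general (q n m m' d : ℕ)
    (x x' : ℕ → Fin q) (e : ℕ → ℕ)
    (he0 : e 0 = 0) (hetop : e (d + 1) = n + 1)
    (hemono : ∀ a b, a < b → b ≤ d + 1 → e a < e b)
    (hsupp : ((Finset.Icc 1 n).filter fun k => x k ≠ x' k) = (Finset.Icc 1 d).image e)
    (j j' : ℕ → ℕ)
    (hx : IsRunDecomp n m x j) (hx' : IsRunDecomp n m' x' j')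
    (lam lam' : ℕ) (hlam1 : 1 ≤ lam) (hlamle : lam ≤ lam') (hlam'd : lam' ≤ d)
    (S Δ : ℕ)
    (hS : S = (((Finset.Icc 1 n).filter fun k => x k ≠ x' k) \
        Finset.Icc (e lam) (e lam')).card)
    (hΔ : Δ = ((Finset.Icc (e lam) (e lam' - 1)).filter fun i => x' i ≠ x (i + 1)).card)
    (d' : ℕ) :
    (d' < S + Δ →
      (Finset.Icc 1 m ×ˢ Finset.Icc 1 m').filter (fun p =>
        e (lam - 1) < j p.1 ∧ j p.1 ≤ e lam ∧ e lam' ≤ j' p.2 ∧ j' p.2 < e (lam' + 1) ∧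
        hdist (n - 1) (delN x (j p.1)) (delN x' (j' p.2)) = d') = ∅) ∧
    (S + Δ ≤ d' →
      ((Finset.Icc 1 m ×ˢ Finset.Icc 1 m').filter fun p =>
        e (lam - 1) < j p.1 ∧ j p.1 ≤ e lam ∧ e lam' ≤ j' p.2 ∧ j' p.2 < e (lam' + 1) ∧
        hdist (n - 1) (delN x (j p.1)) (delN x' (j' p.2)) = d').card
          ≤ d' - S - Δ + 1) := by
  have he : StrictMonoOn e (Set.Iic (d + 1)) := fun a _ b hb hab => hemono a b hab hb
  have hlo_pos : 0 < e lam := he0 ▸ hemono 0 lam hlam1 (by omega)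
  have hlohi : e lam ≤ e lam' := he.monotoneOn (by simp; omega) (by simp; omega) hlamle
  have hhi_le : e (lam' + 1) ≤ n + 1 := hetop ▸ he.monotoneOn (by simp; omega) (by simp) (by omega)
  have hleft : ∀ k, e (lam - 1) < k → k < e lam → x k = x' k := fun k hk hk' =>
    eq_of_between_consecutive_support he hetop hsupp (t := lam - 1) (by omega) hk
      (by rwa [Nat.sub_add_cancel hlam1])
  have hright : ∀ k, e lam' < k → k < e (lam' + 1) → x k = x' k := fun k hk hk' =>
    eq_of_between_consecutive_support he hetop hsupp hlam'd hk hk'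
  have hΔ' : Δ = #{k ∈ Ico (e lam) (e lam') | x' k ≠ x (k + 1)} := by
    rw [hΔ]; congr 2; ext k; simp only [mem_Icc, mem_Ico]; omega
  have hdist_eq : ∀ a b, e (lam - 1) < a → a ≤ e lam → e lam' ≤ b → b < e (lam' + 1) →
      hdist (n - 1) (delN x a) (delN x' b) = S + Δ + #{k ∈ Ico a (e lam) | x' k ≠ x (k + 1)} +
        #{k ∈ Ico (e lam') b | x' k ≠ x (k + 1)} := fun a b ha ha' hb hb' => by
    rw [hS, hΔ']
    exact hdist_delN_delN_of_agree x x' (by omega) ha' hlohi hb (by omega)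
      (fun k hk hk' => hleft k (by omega) hk') (fun k hk hk' => hright k hk (by omega))
  refine ⟨fun hd' => filter_eq_empty_iff.2 fun p _ hp => ?_, fun hd' => ?_⟩
  · have := hdist_eq _ _ hp.1 hp.2.1 hp.2.2.1 hp.2.2.2.1
    omega
  refine card_le_succ_of_add_eq _ _ _ ((hx.injOn_card_filter_Ico_left hleft).mono ?_)
    ((hx'.injOn_card_filter_Ico_right hright).mono ?_) fun p hp => ?_
  rotate_right
  · obtain ⟨-, ha, ha', hb, hb', hdist_d'⟩ := mem_filter.1 hp
    have := hdist_eq _ _ ha ha' hb hb'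
    omega
  all_goals
    rintro _ ⟨p, hp, rfl⟩
    simp only [coe_filter, mem_product, mem_Icc, Set.mem_ofPred_eq] at hp ⊢
    omega

/-- Here `e` enumerates the support: `e 0 = 0 = i₀`, `e (d+1) = n+1 = i_{d+1}`,
`e` is strictly increasing on `{0, …, d+1}`, and
`supp(x − x') = {e 1 < e 2 < ⋯ < e d}`.  With `S = |supp(x − x') ∖ [i_λ, i_{λ'}]|` and
`Δ = |{i ∈ [i_λ, i_{λ'}−1] : x'_i ≠ x_{i+1}}|`:
(a) if `d' < S + Δ` there is no pair of run endpoints `(j_i, j'_{i'})` with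
`i_{λ−1} < j_i ≤ i_λ ≤ i_{λ'} ≤ j'_{i'} < i_{λ'+1}` and
`d_H(x_{[n]∖{j_i}}, x'_{[n]∖{j'_{i'}}}) = d'`; and
(b) if `d' ≥ S + Δ` there are at most `d' − S − Δ + 1` such pairs. -/
theorem stmt13 (q n m m' d : ℕ) (hq : 2 ≤ q) (hd : 2 ≤ d)
    (x x' : ℕ → Fin q) (e : ℕ → ℕ)
    (he0 : e 0 = 0) (hetop : e (d + 1) = n + 1)
    (hemono : ∀ a b, a < b → b ≤ d + 1 → e a < e b)
    (hsupp : ((Finset.Icc 1 n).filter fun k => x k ≠ x' k) = (Finset.Icc 1 d).image e)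
    (j j' : ℕ → ℕ)
    (hx : IsRunDecomp n m x j) (hx' : IsRunDecomp n m' x' j')
    (lam lam' : ℕ) (hlam1 : 1 ≤ lam) (hlamle : lam ≤ lam') (hlam'd : lam' ≤ d)
    (S Δ : ℕ)
    (hS : S = (((Finset.Icc 1 n).filter fun k => x k ≠ x' k) \
        Finset.Icc (e lam) (e lam')).card)
    (hΔ : Δ = ((Finset.Icc (e lam) (e lam' - 1)).filter fun i => x' i ≠ x (i + 1)).card)
    (d' : ℕ) :
    (d' < S + Δ →
      (Finset.Icc 1 m ×ˢ Finset.Icc 1 m').filter (fun p =>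
        e (lam - 1) < j p.1 ∧ j p.1 ≤ e lam ∧ e lam' ≤ j' p.2 ∧ j' p.2 < e (lam' + 1) ∧
        hdist (n - 1) (delN x (j p.1)) (delN x' (j' p.2)) = d') = ∅) ∧
    (S + Δ ≤ d' →
      ((Finset.Icc 1 m ×ˢ Finset.Icc 1 m').filter fun p =>
        e (lam - 1) < j p.1 ∧ j p.1 ≤ e lam ∧ e lam' ≤ j' p.2 ∧ j' p.2 < e (lam' + 1) ∧
        hdist (n - 1) (delN x (j p.1)) (delN x' (j' p.2)) = d').card
          ≤ d' - S - Δ + 1) :=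
  stmt13_general q n m m' d x x' e he0 hetop hemono hsupp j j' hx hx' lam lam' hlam1 hlamle hlam'd S
    Δ hS hΔ d'
end

section
/- Let x, x' ∈ Σ_q^n with supp(x−x') = {i_1, i_2}, i_1 < i_2, and let 0 = j_0 < j_1 < ⋯ < j_m = n be the right endpoints of the runs of x. Then: (a) if ℓ ∈ [m] with ℓ ≥ 2 and [j_{ℓ−2}+1, j_ℓ] ∩ {i_1, i_2} = ∅, then E^{j_ℓ}_{j_{ℓ−1}} ⊆ E^{j_ℓ}_{j_ℓ} ∪ E^{j_{ℓ−1}}_{j_{ℓ−1}}; and (b) if ℓ ∈ [m] with ℓ ≥ 3 and [j_{ℓ−3}+1, j_ℓ] ∩ {i_1, i_2} = ∅, then E^{j_ℓ}_{j_{ℓ−2}} ⊆ E^{j_ℓ}_{j_ℓ} ∪ E^{j_{ℓ−2}}_{j_{ℓ−2}}. -/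
/-- Membership of `v` in `E^a_b = B^S_2(x_{[n]∖{a}}) ∩ B^S_2(x'_{[n]∖{b}})` (a set of
length-`(n−1)` sequences). -/
def memE {q : ℕ} (n : ℕ) (x x' : ℕ → Fin q) (a b : ℕ) (v : ℕ → Fin q) : Prop :=
  hdist (n - 1) v (delN x a) ≤ 2 ∧ hdist (n - 1) v (delN x' b) ≤ 2

lemma hdist_pair_le {q : ℕ} (n : ℕ) (v u1 u2 u1' u2' : ℕ → Fin q)
    (h : ∀ i ∈ Finset.Icc 1 n,
      (u1' i = u1 i ∧ u2 i = u2' i) ∨ (u1' i = u2' i ∧ u2 i = u1 i)) :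
    hdist n v u1' + hdist n v u2 ≤ hdist n v u1 + hdist n v u2' := by
  unfold hdist
  rw [Finset.card_filter, Finset.card_filter, Finset.card_filter, Finset.card_filter,
    ← Finset.sum_add_distrib, ← Finset.sum_add_distrib]
  apply Finset.sum_le_sum
  intro i hi
  rcases h i hi with ⟨e1, e2⟩ | ⟨e1, e2⟩ <;> rw [e1, e2] <;> split_ifs <;> omega

lemma swapE {q : ℕ} (n : ℕ) (x x' v : ℕ → Fin q) (a b : ℕ) (hab : a ≤ b)
    (heq : ∀ k, a ≤ k → k ≤ b → x k = x' k) :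
    hdist n v (delN x' b) + hdist n v (delN x a) ≤
    hdist n v (delN x b) + hdist n v (delN x' a) := by
  apply hdist_pair_le
  intro i _
  by_cases hcase : a ≤ i ∧ i < b
  · left
    constructor
    · simp only [delN, if_pos hcase.2]
      exact (heq i hcase.1 (le_of_lt hcase.2)).symm
    · simp only [delN]
      rw [if_neg (by omega), if_neg (by omega)]
      exact heq (i + 1) (by omega) (by omega)
  · right
    constructor <;> (simp only [delN]; split_ifs <;> first | rfl | omega)

lemma coreE {q : ℕ} (n : ℕ) (x x' : ℕ → Fin q) (i1 i2 : ℕ)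
    (hsupp : ((Finset.Icc 1 n).filter fun k => x k ≠ x' k) = {i1, i2})
    (a b c : ℕ) (hca : c < a) (hab : a < b) (hbn : b ≤ n)
    (hempty : Finset.Icc (c + 1) b ∩ ({i1, i2} : Finset ℕ) = ∅)
    (v : ℕ → Fin q) (hv : memE n x x' b a v) :
    memE n x x' b b v ∨ memE n x x' a a v := by
  have heq : ∀ k, a ≤ k → k ≤ b → x k = x' k := by
    intro k h1 h2
    by_contra hne
    have hk1 : k ∈ ({i1, i2} : Finset ℕ) := by
      rw [← hsupp]
      exact Finset.mem_filter.mpr ⟨Finset.mem_Icc.mpr ⟨by omega, by omega⟩, hne⟩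
    have hk2 : k ∈ Finset.Icc (c + 1) b ∩ ({i1, i2} : Finset ℕ) :=
      Finset.mem_inter.mpr ⟨Finset.mem_Icc.mpr ⟨by omega, h2⟩, hk1⟩
    rw [hempty] at hk2
    exact absurd hk2 (Finset.notMem_empty k)
  obtain ⟨h1, h2⟩ := hv
  have hs := swapE (n - 1) x x' v a b (le_of_lt hab) heq
  have hor : hdist (n - 1) v (delN x' b) ≤ 2 ∨ hdist (n - 1) v (delN x a) ≤ 2 := by omega
  rcases hor with h | h
  · exact Or.inl ⟨h1, h⟩
  · exact Or.inr ⟨h, h2⟩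

/-- If `supp(x − x') = {i₁, i₂}` and `j_i` are the run endpoints of `x`, then:
(a) if `[j_{ℓ−2}+1, j_ℓ] ∩ {i₁, i₂} = ∅` then `E^{j_ℓ}_{j_{ℓ−1}} ⊆ E^{j_ℓ}_{j_ℓ} ∪
E^{j_{ℓ−1}}_{j_{ℓ−1}}`; and (b) if `[j_{ℓ−3}+1, j_ℓ] ∩ {i₁, i₂} = ∅` then
`E^{j_ℓ}_{j_{ℓ−2}} ⊆ E^{j_ℓ}_{j_ℓ} ∪ E^{j_{ℓ−2}}_{j_{ℓ−2}}`. -/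
theorem stmt15 (q n m : ℕ) (hq : 2 ≤ q) (x x' : ℕ → Fin q)
    (i1 i2 : ℕ) (hlt : i1 < i2)
    (hsupp : ((Finset.Icc 1 n).filter fun k => x k ≠ x' k) = {i1, i2})
    (j : ℕ → ℕ) (hx : IsRunDecomp n m x j) :
    (∀ ℓ, 2 ≤ ℓ → ℓ ≤ m →
      Finset.Icc (j (ℓ - 2) + 1) (j ℓ) ∩ ({i1, i2} : Finset ℕ) = ∅ →
      ∀ v : ℕ → Fin q, memE n x x' (j ℓ) (j (ℓ - 1)) v →
        memE n x x' (j ℓ) (j ℓ) v ∨ memE n x x' (j (ℓ - 1)) (j (ℓ - 1)) v) ∧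
    (∀ ℓ, 3 ≤ ℓ → ℓ ≤ m →
      Finset.Icc (j (ℓ - 3) + 1) (j ℓ) ∩ ({i1, i2} : Finset ℕ) = ∅ →
      ∀ v : ℕ → Fin q, memE n x x' (j ℓ) (j (ℓ - 2)) v →
        memE n x x' (j ℓ) (j ℓ) v ∨ memE n x x' (j (ℓ - 2)) (j (ℓ - 2)) v) := by
  obtain ⟨hj0, hjm, hmono, -, -⟩ := hx
  have jlt : ∀ i i', i < i' → i' ≤ m → j i < j i' := by
    intro i i' h h'
    induction i' with
    | zero => omega
    | succ k ih =>
      rcases Nat.lt_succ_iff_lt_or_eq.mp h with h | h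
      · exact lt_trans (ih h (by omega)) (hmono k (by omega))
      · subst h; exact hmono i (by omega)
  have jle : j m = n := hjm
  constructor
  · intro ℓ h2 hm hempty v hv
    have hbn : j ℓ ≤ n := by
      rcases eq_or_lt_of_le hm with h | h
      · rw [h, hjm]
      · exact le_of_lt (hjm ▸ jlt ℓ m h le_rfl)
    exact coreE n x x' i1 i2 hsupp (j (ℓ - 1)) (j ℓ) (j (ℓ - 2))
      (jlt (ℓ - 2) (ℓ - 1) (by omega) (by omega))
      (by have := jlt (ℓ - 1) ℓ (by omega) hm; omega) hbn hempty v hv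
  · intro ℓ h3 hm hempty v hv
    have hbn : j ℓ ≤ n := by
      rcases eq_or_lt_of_le hm with h | h
      · rw [h, hjm]
      · exact le_of_lt (hjm ▸ jlt ℓ m h le_rfl)
    exact coreE n x x' i1 i2 hsupp (j (ℓ - 2)) (j ℓ) (j (ℓ - 3))
      (jlt (ℓ - 3) (ℓ - 2) (by omega) (by omega))
      (by have := jlt (ℓ - 2) ℓ (by omega) hm; omega) hbn hempty v hv
end

section
/- Let x, x' ∈ Σ_q^n with supp(x−x') = {i_1, i_2}, i_1 < i_2, and let 0 = j_0 < j_1 < ⋯ < j_m = n be the right endpoints of the runs of x. Then: (a) if ℓ ∈ [m] with ℓ ≤ m−1 and [j_{ℓ−1}+1, j_{ℓ+1}] ∩ {i_1, i_2} = ∅, then E^{j_ℓ}_{j_{ℓ+1}} ⊆ E^{j_ℓ}_{j_ℓ} ∪ E^{j_{ℓ+1}}_{j_{ℓ+1}}; and (b) if ℓ ∈ [m] with ℓ ≤ m−2 and [j_{ℓ−1}+1, j_{ℓ+2}] ∩ {i_1, i_2} = ∅, then E^{j_ℓ}_{j_{ℓ+2}} ⊆ E^{j_ℓ}_{j_ℓ}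 ∪ E^{j_{ℓ+2}}_{j_{ℓ+2}}. -/
/-- Swapping values of the reference sequence on a set `P` changes the Hamming
distance by the difference of mismatch counts on `P`. -/
lemma hdist_swap {q N : ℕ} (v s t : ℕ → Fin q) (P : Finset ℕ)
    (hP : P ⊆ Finset.Icc 1 N)
    (hoff : ∀ i ∈ Finset.Icc 1 N, i ∉ P → s i = t i) :
    hdist N v s + (P.filter fun i => v i ≠ t i).card
      = hdist N v t + (P.filter fun i => v i ≠ s i).card := by
  classical
  have hsplit : ∀ f : ℕ → Fin q,
      hdist N v f = ((Finset.Icc 1 N \ P).filter fun i => v i ≠ f i).card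
        + (P.filter fun i => v i ≠ f i).card := by
    intro f
    unfold hdist
    have hu : (Finset.Icc 1 N \ P) ∪ P = Finset.Icc 1 N :=
      Finset.sdiff_union_of_subset hP
    conv_lhs => rw [← hu]
    rw [Finset.filter_union,
      Finset.card_union_of_disjoint (Finset.disjoint_filter_filter Finset.sdiff_disjoint)]
  have hC : ((Finset.Icc 1 N \ P).filter fun i => v i ≠ s i)
      = ((Finset.Icc 1 N \ P).filter fun i => v i ≠ t i) := by
    apply Finset.filter_congr
    intro i hi
    have hi' := Finset.mem_sdiff.mp hi
    rw [hoff i hi'.1 hi'.2]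
  rw [hsplit s, hsplit t, hC]
  omega

lemma masterE {q N : ℕ} (v u w u' w' : ℕ → Fin q) (P : Finset ℕ)
    (hP : P ⊆ Finset.Icc 1 N)
    (hu : ∀ i ∈ Finset.Icc 1 N, i ∉ P → u' i = u i)
    (hw : ∀ i ∈ Finset.Icc 1 N, i ∉ P → w' i = w i)
    (huP : ∀ i ∈ P, w' i = u i)
    (hwP : ∀ i ∈ P, u' i = w i)
    (h1 : hdist N v u ≤ 2) (h2 : hdist N v w ≤ 2) :
    (hdist N v u ≤ 2 ∧ hdist N v w' ≤ 2) ∨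
    (hdist N v u' ≤ 2 ∧ hdist N v w ≤ 2) := by
  have e1 := hdist_swap v w' w P hP hw
  have e2 := hdist_swap v u' u P hP hu
  have fw : (P.filter fun i => v i ≠ w' i) = (P.filter fun i => v i ≠ u i) :=
    Finset.filter_congr (fun i hi => by rw [huP i hi])
  have fu : (P.filter fun i => v i ≠ u' i) = (P.filter fun i => v i ≠ w i) :=
    Finset.filter_congr (fun i hi => by rw [hwP i hi])
  rw [fw] at e1
  rw [fu] at e2
  by_cases h : (P.filter fun i => v i ≠ u i).card ≤ (P.filter fun i => v i ≠ w i).card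
  · exact Or.inl ⟨h1, by omega⟩
  · exact Or.inr ⟨by omega, h2⟩

lemma auxE {q : ℕ} (n : ℕ) (x x' : ℕ → Fin q) (p t : ℕ) (P : Finset ℕ)
    (hp1 : 1 ≤ p) (hpt : p < t) (htn : t ≤ n)
    (hpP : p ∈ P)
    (hPsub : ∀ i ∈ P, p ≤ i ∧ i < t)
    (hconst : ∀ i, p < i → i < t → i ∉ P → x i = x (i + 1))
    (hagree : ∀ k, p ≤ k → k ≤ t → x k = x' k)
    (v : ℕ → Fin q)
    (hv : memE n x x' p t v) :
    memE n x x' p p v ∨ memE n x x' t t v := by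
  obtain ⟨h1, h2⟩ := hv
  have hP : P ⊆ Finset.Icc 1 (n - 1) := by
    intro i hi
    obtain ⟨hip, hit⟩ := hPsub i hi
    exact Finset.mem_Icc.mpr ⟨by omega, by omega⟩
  have hconst' : ∀ i, p < i → i < t → i ∉ P → x' i = x' (i + 1) := by
    intro i h1 h2 h3
    rw [← hagree i (by omega) (by omega), ← hagree (i+1) (by omega) (by omega)]
    exact hconst i h1 h2 h3
  have hu : ∀ i ∈ Finset.Icc 1 (n-1), i ∉ P → delN x t i = delN x p i := by
    intro i _ hiP
    unfold delN
    rcases lt_trichotomy i p with h | h | h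
    · rw [if_pos (show i < t by omega), if_pos h]
    · exact absurd (h ▸ hpP) hiP
    · by_cases h2 : i < t
      · rw [if_pos h2, if_neg (show ¬ i < p by omega)]
        exact hconst i h h2 hiP
      · rw [if_neg h2, if_neg (show ¬ i < p by omega)]
  have hw : ∀ i ∈ Finset.Icc 1 (n-1), i ∉ P → delN x' p i = delN x' t i := by
    intro i _ hiP
    unfold delN
    rcases lt_trichotomy i p with h | h | h
    · rw [if_pos h, if_pos (show i < t by omega)]
    · exact absurd (h ▸ hpP) hiP
    · by_cases h2 : i < t
      · rw [if_neg (show ¬ i < p by omega), if_pos h2]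
        exact (hconst' i h h2 hiP).symm
      · rw [if_neg (show ¬ i < p by omega), if_neg h2]
  have huP : ∀ i ∈ P, delN x' p i = delN x p i := by
    intro i hi
    obtain ⟨hip, hit⟩ := hPsub i hi
    unfold delN
    rw [if_neg (by omega), if_neg (by omega)]
    exact (hagree (i+1) (by omega) (by omega)).symm
  have hwP : ∀ i ∈ P, delN x t i = delN x' t i := by
    intro i hi
    obtain ⟨hip, hit⟩ := hPsub i hi
    unfold delN
    rw [if_pos hit, if_pos hit]
    exact hagree i hip (by omega)
  exact masterE v (delN x p) (delN x' t) (delN x t) (delN x' p) P hP hu hw huP hwP h1 h2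

/-- If `supp(x − x') = {i₁, i₂}` and `j_i` are the run endpoints of `x`, then:
(a) if `ℓ ≤ m − 1` and `[j_{ℓ−1}+1, j_{ℓ+1}] ∩ {i₁, i₂} = ∅` then
`E^{j_ℓ}_{j_{ℓ+1}} ⊆ E^{j_ℓ}_{j_ℓ} ∪ E^{j_{ℓ+1}}_{j_{ℓ+1}}`; and (b) if `ℓ ≤ m − 2`
and `[j_{ℓ−1}+1, j_{ℓ+2}] ∩ {i₁, i₂} = ∅` then
`E^{j_ℓ}_{j_{ℓ+2}} ⊆ E^{j_ℓ}_{j_ℓ} ∪ E^{j_{ℓ+2}}_{j_{ℓ+2}}`. -/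
theorem stmt16 (q n m : ℕ) (hq : 2 ≤ q) (x x' : ℕ → Fin q)
    (i1 i2 : ℕ) (hlt : i1 < i2)
    (hsupp : ((Finset.Icc 1 n).filter fun k => x k ≠ x' k) = {i1, i2})
    (j : ℕ → ℕ) (hx : IsRunDecomp n m x j) :
    (∀ ℓ, 1 ≤ ℓ → ℓ ≤ m - 1 →
      Finset.Icc (j (ℓ - 1) + 1) (j (ℓ + 1)) ∩ ({i1, i2} : Finset ℕ) = ∅ →
      ∀ v : ℕ → Fin q, memE n x x' (j ℓ) (j (ℓ + 1)) v →
        memE n x x' (j ℓ) (j ℓ) v ∨ memE n x x' (j (ℓ + 1)) (j (ℓ + 1)) v) ∧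
    (∀ ℓ, 1 ≤ ℓ → ℓ ≤ m - 2 →
      Finset.Icc (j (ℓ - 1) + 1) (j (ℓ + 2)) ∩ ({i1, i2} : Finset ℕ) = ∅ →
      ∀ v : ℕ → Fin q, memE n x x' (j ℓ) (j (ℓ + 2)) v →
        memE n x x' (j ℓ) (j ℓ) v ∨ memE n x x' (j (ℓ + 2)) (j (ℓ + 2)) v) := by
  obtain ⟨hj0, hjm, hjlt, hrun, hbd⟩ := hx
  have hmono : ∀ b, b ≤ m → ∀ a, a ≤ b → j a ≤ j b := by
    intro b
    induction b with
    | zero =>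
      intro _ a ha
      have : a = 0 := Nat.le_zero.mp ha
      rw [this]
    | succ k ih =>
      intro hb a ha
      rcases Nat.lt_or_ge a (k+1) with h | h
      · exact le_trans (ih (by omega) a (by omega)) (le_of_lt (hjlt k (by omega)))
      · have : a = k + 1 := by omega
        rw [this]
  -- generic agreement on an interval avoiding the support
  have hagreeGen : ∀ (lo hi : ℕ), hi ≤ n →
      Finset.Icc lo hi ∩ ({i1, i2} : Finset ℕ) = ∅ →
      ∀ k, lo ≤ k → k ≤ hi → 1 ≤ k → x k = x' k := by
    intro lo hi hhn hemp k hk1 hk2 hk3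
    by_contra hne
    have hk : k ∈ (Finset.Icc 1 n).filter fun k => x k ≠ x' k :=
      Finset.mem_filter.mpr ⟨Finset.mem_Icc.mpr ⟨hk3, by omega⟩, hne⟩
    rw [hsupp] at hk
    have : k ∈ Finset.Icc lo hi ∩ ({i1, i2} : Finset ℕ) :=
      Finset.mem_inter.mpr ⟨Finset.mem_Icc.mpr ⟨hk1, hk2⟩, hk⟩
    rw [hemp] at this
    exact absurd this (Finset.notMem_empty k)
  constructor
  · -- part (a)
    intro ℓ hℓ1 hℓm hemp v hv
    have hℓ1m : ℓ + 1 ≤ m := by omega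
    have h01 : 0 < j 1 := by
      have h := hjlt 0 (by omega); rw [hj0] at h; exact h
    have hp1 : 1 ≤ j ℓ := le_trans h01 (hmono ℓ (by omega) 1 hℓ1)
    have hpt : j ℓ < j (ℓ + 1) := hjlt ℓ (by omega)
    have htn : j (ℓ + 1) ≤ n := by
      have := hmono m le_rfl (ℓ + 1) hℓ1m; omega
    have hprev : j (ℓ - 1) + 1 ≤ j ℓ := by
      have := hjlt (ℓ - 1) (by omega)
      rw [Nat.sub_add_cancel hℓ1] at this
      omega
    have hrunA : ∀ a b, j ℓ + 1 ≤ a → a ≤ j (ℓ+1) → j ℓ + 1 ≤ b → b ≤ j (ℓ+1) →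
        x a = x b := by
      have := hrun (ℓ + 1) (by omega) hℓ1m
      simpa using this
    refine auxE n x x' (j ℓ) (j (ℓ+1)) {j ℓ} hp1 hpt htn (Finset.mem_singleton_self _)
      ?_ ?_ ?_ v hv
    · intro i hi
      rw [Finset.mem_singleton] at hi
      exact ⟨le_of_eq hi.symm, hi ▸ hpt⟩
    · intro i h1 h2 hiP
      exact hrunA i (i+1) (by omega) (by omega) (by omega) (by omega)
    · intro k hk1 hk2
      exact hagreeGen (j (ℓ-1) + 1) (j (ℓ+1)) htn hemp k (by omega) hk2 (by omega)
  · -- part (b)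
    intro ℓ hℓ1 hℓm hemp v hv
    have hℓ2m : ℓ + 2 ≤ m := by omega
    have h01 : 0 < j 1 := by
      have h := hjlt 0 (by omega); rw [hj0] at h; exact h
    have hp1 : 1 ≤ j ℓ := le_trans h01 (hmono ℓ (by omega) 1 hℓ1)
    have hpr : j ℓ < j (ℓ + 1) := hjlt ℓ (by omega)
    have hrt : j (ℓ + 1) < j (ℓ + 2) := hjlt (ℓ + 1) (by omega)
    have htn : j (ℓ + 2) ≤ n := by
      have := hmono m le_rfl (ℓ + 2) hℓ2m; omega
    have hprev : j (ℓ - 1) + 1 ≤ j ℓ := by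
      have := hjlt (ℓ - 1) (by omega)
      rw [Nat.sub_add_cancel hℓ1] at this
      omega
    have hrunA : ∀ a b, j ℓ + 1 ≤ a → a ≤ j (ℓ+1) → j ℓ + 1 ≤ b → b ≤ j (ℓ+1) →
        x a = x b := by
      have := hrun (ℓ + 1) (by omega) (by omega)
      simpa using this
    have hrunB : ∀ a b, j (ℓ+1) + 1 ≤ a → a ≤ j (ℓ+2) → j (ℓ+1) + 1 ≤ b →
        b ≤ j (ℓ+2) → x a = x b := by
      have := hrun (ℓ + 2) (by omega) hℓ2m
      simpa using this
    refine auxE n x x' (j ℓ) (j (ℓ+2)) {j ℓ, j (ℓ+1)} hp1 (by omega) htn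
      (Finset.mem_insert_self _ _) ?_ ?_ ?_ v hv
    · intro i hi
      rcases Finset.mem_insert.mp hi with h | h
      · exact ⟨le_of_eq h.symm, by omega⟩
      · rw [Finset.mem_singleton] at h
        exact ⟨by omega, by omega⟩
    · intro i h1 h2 hiP
      have hir : i ≠ j (ℓ + 1) := by
        intro h
        exact hiP (Finset.mem_insert.mpr (Or.inr (Finset.mem_singleton.mpr h)))
      rcases lt_or_gt_of_ne hir with h | h
      · exact hrunA i (i+1) (by omega) (by omega) (by omega) (by omega)
      · exact hrunB i (i+1) (by omega) (by omega) (by omega) (by omega)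
    · intro k hk1 hk2
      exact hagreeGen (j (ℓ-1) + 1) (j (ℓ+2)) htn hemp k (by omega) hk2 (by omega)
end

section
/- Let x, x' ∈ Σ_q^n with supp(x−x') = {i_1, i_2}, i_1 < i_2. If both x_{[n]∖{i_1}} = x'_{[n]∖{i_2}} and x_{[n]∖{i_2}} = x'_{[n]∖{i_1}}, then i_2 = i_1 + 1, x_{i_1} = x'_{i_2}, x_{i_2} = x'_{i_1}, and x_{i_1} ≠ x_{i_2}; that is, x = w a b w' and x' = w b a w' for some a ≠ b in Σ_q, where w = x_{[1, i_1−1]} = x'_{[1, i_1−1]} and w' = x_{[i_2+1, n]} = x'_{[i_2+1, n]}. -/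
/-- `del x j` is the length-`n` sequence obtained from the length-`(n+1)` sequence `x`
by deleting its `j`-th coordinate. -/
def del {q n : ℕ} (x : Fin (n + 1) → Fin q) (j : Fin (n + 1)) : Fin n → Fin q :=
  fun i => x (j.succAbove i)

/-!
Write `i₁ = k` and read both deletion identities at position `k` of the shortened word:
deleting `k` shifts position `k` to `k + 1`, deleting `i₂ > k` leaves it in place, so
`x (k+1) = x' k` and `x k = x' (k+1)`. If `k + 1` were not `i₂`, then `x` and `x'` would agree at
`k + 1`, forcing `x k = x' (k+1) = x (k+1) = x' k`, against `k ∈ supp(x − x')`.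
-/

namespace del

variable {q n : ℕ} (x : Fin (n + 1) → Fin q)

theorem castSucc_self (k : Fin n) : del x k.castSucc k = x k.succ :=
  congrArg x (Fin.succAbove_castSucc_self k)

theorem of_castSucc_lt {j : Fin (n + 1)} {k : Fin n} (h : k.castSucc < j) :
    del x j k = x k.castSucc :=
  congrArg x (Fin.succAbove_of_castSucc_lt j k h)

end del

theorem swap_of_del_eq_del {q n : ℕ} {x x' : Fin (n + 1) → Fin q} {k : Fin n}
    {j : Fin (n + 1)} (hlt : k.castSucc < j)
    (h1 : del x k.castSucc = del x' j) (h2 : del x j = del x' k.castSucc) :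
    x k.succ = x' k.castSucc ∧ x k.castSucc = x' k.succ := by
  constructor
  · rw [← del.castSucc_self x k, h1, del.of_castSucc_lt _ hlt]
  · rw [← del.of_castSucc_lt x hlt, h2, del.castSucc_self]

theorem stmt19_general (q n : ℕ) (x x' : Fin (n + 1) → Fin q)
    (i1 i2 : Fin (n + 1)) (hlt : i1 < i2)
    (hsupp : (Finset.univ.filter fun k => x k ≠ x' k) = {i1, i2})
    (h1 : del x i1 = del x' i2) (h2 : del x i2 = del x' i1) :
    (i2 : ℕ) = (i1 : ℕ) + 1 ∧ x i1 = x' i2 ∧ x i2 = x' i1 ∧ x i1 ≠ x i2 := by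
  obtain ⟨k, rfl⟩ := Fin.exists_castSucc_eq.mpr (Fin.ne_last_of_lt hlt)
  have hdiff (m : Fin (n + 1)) : x m ≠ x' m ↔ m = k.castSucc ∨ m = i2 := by
    simpa using Finset.ext_iff.mp hsupp m
  obtain ⟨hsucc, hcast⟩ := swap_of_del_eq_del hlt h1 h2
  obtain rfl : i2 = k.succ := by
    by_contra hne
    have hagree : x k.succ = x' k.succ := by
      by_contra h
      rcases (hdiff _).mp h with h | h
      · exact Fin.castSucc_lt_succ.ne' h
      · exact hne h.symm
    exact (hdiff _).mpr (Or.inl rfl) (hcast.trans (hagree.symm.trans hsucc))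
  exact ⟨Fin.val_succ k, hcast, hsucc,
    fun h => (hdiff _).mpr (Or.inr rfl) (h.symm.trans hcast)⟩

/-- If `supp(x − x') = {i₁, i₂}` with `i₁ < i₂` and both `x_{[n]∖{i₁}} = x'_{[n]∖{i₂}}`
and `x_{[n]∖{i₂}} = x'_{[n]∖{i₁}}`, then `i₂ = i₁ + 1`, `x_{i₁} = x'_{i₂}`,
`x_{i₂} = x'_{i₁}` and `x_{i₁} ≠ x_{i₂}`; i.e. `x = w a b w'` and `x' = w b a w'` with
`a ≠ b` (the common prefix `w` and suffix `w'` agreeing since `x` and `x'` coincide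
outside `{i₁, i₂}`). -/
theorem stmt19 (q n : ℕ) (hq : 2 ≤ q) (x x' : Fin (n + 1) → Fin q)
    (i1 i2 : Fin (n + 1)) (hlt : i1 < i2)
    (hsupp : (Finset.univ.filter fun k => x k ≠ x' k) = {i1, i2})
    (h1 : del x i1 = del x' i2) (h2 : del x i2 = del x' i1) :
    (i2 : ℕ) = (i1 : ℕ) + 1 ∧ x i1 = x' i2 ∧ x i2 = x' i1 ∧ x i1 ≠ x i2 :=
  stmt19_general q n x x' i1 i2 hlt hsupp h1 h2
end
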